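/- arXiv:1107.5125 — 4 statements merged into one kernel-verified Lean document; each statement's English description precedes it below -/
import Mathlib

section
/- For any two even finitely supported permutations h and h' of ℕ, h and h' are conjugate in the infinite alternating group A_∞ (i.e., by an even finitely supported permutation) if and only if they are conjugate in the infinite symmetric group S_∞ (i.e., by some finitely supported permutation). -/
/-- `g` belongs to `S_∞`: a permutation of `ℕ` with finite support. -/
def FinSupp (g : Equiv.Perm ℕ) : Prop := {x : ℕ | g x ≠ x}.Finite

/-- `g` is an even permutation: a product of an even number of transpositions. -/
def IsEvenPerm (g : Equiv.Perm ℕ) : Prop :=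
  ∃ l : List (Equiv.Perm ℕ), (∀ τ ∈ l, τ.IsSwap) ∧ Even l.length ∧ l.prod = g

/-- `g` belongs to the infinite alternating group `A_∞`. -/
def MemAinf (g : Equiv.Perm ℕ) : Prop := FinSupp g ∧ IsEvenPerm g

/-- `g` and `h` are conjugate in `S_∞` (by a finitely supported permutation). -/
def ConjS (g h : Equiv.Perm ℕ) : Prop := ∃ c, FinSupp c ∧ c * g * c⁻¹ = h

/-- `g` and `h` are conjugate in `A_∞` (by an even finitely supported permutation). -/
def ConjA (g h : Equiv.Perm ℕ) : Prop := ∃ c, MemAinf c ∧ c * g * c⁻¹ = h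

/-- the class `[h]`: the union of the `A_∞`-conjugacy classes of `h` and `h⁻¹`. -/
def cls (h : Equiv.Perm ℕ) : Set (Equiv.Perm ℕ) := {x | ConjA h x ∨ ConjA h⁻¹ x}

/-- `λ_h(g)`: the minimal `n` such that `g` is a product of `n` elements of `[h]`. -/
noncomputable def lam (h g : Equiv.Perm ℕ) : ℕ :=
  sInf {n | ∃ l : List (Equiv.Perm ℕ), l.length = n ∧ (∀ x ∈ l, x ∈ cls h) ∧ l.prod = g}

/-- the word length `λ(g)`: the minimal number of transpositions with product `g`. -/
noncomputable def wl (g : Equiv.Perm ℕ) : ℕ :=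
  sInf {n | ∃ l : List (Equiv.Perm ℕ), l.length = n ∧ (∀ τ ∈ l, τ.IsSwap) ∧ l.prod = g}

/-- `ι_k = (1 2)(3 4)⋯(2k−1 2k)`. -/
def iota (k : ℕ) : Equiv.Perm ℕ :=
  ((List.range k).map (fun i => Equiv.swap (2*i+1) (2*i+2))).prod

lemma finsupp_prod_swaps {c : Equiv.Perm ℕ} (hc : FinSupp c) :
    ∃ l : List (Equiv.Perm ℕ), (∀ τ ∈ l, τ.IsSwap) ∧ l.prod = c := by
  have hmem : c ∈ Subgroup.closure {σ : Equiv.Perm ℕ | σ.IsSwap} := by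
    rw [mem_closure_isSwap']
    have : (MulAction.fixedBy ℕ c)ᶜ = {x : ℕ | c x ≠ x} := by
      ext x; simp [MulAction.fixedBy, Equiv.Perm.smul_def]
    rw [this]; exact hc
  clear hc
  induction hmem using Subgroup.closure_induction with
  | mem x hx => exact ⟨[x], by simpa using hx, by simp⟩
  | one => exact ⟨[], by simp, by simp⟩
  | mul x y _ _ hx hy =>
      obtain ⟨l1, h1, p1⟩ := hx; obtain ⟨l2, h2, p2⟩ := hy
      exact ⟨l1 ++ l2, by intro τ hτ; rcases List.mem_append.1 hτ with h | h
                          exacts [h1 τ h, h2 τ h], by simp [p1, p2]⟩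
  | inv x _ hx =>
      obtain ⟨l, hl, pl⟩ := hx
      refine ⟨(l.map (·⁻¹)).reverse, ?_, ?_⟩
      · intro τ hτ
        simp only [List.mem_reverse, List.mem_map] at hτ
        obtain ⟨σ, hσ, rfl⟩ := hτ
        obtain ⟨a, b, hab, rfl⟩ := hl σ hσ
        exact ⟨a, b, hab, by simp⟩
      · rw [List.prod_reverse_noncomm, List.map_map, ← pl]
        simp [Function.comp]

lemma finsupp_swap (a b : ℕ) : FinSupp (Equiv.swap a b) := by
  apply Set.Finite.subset ((Set.finite_singleton b).insert a)
  intro x hx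
  simp only [Set.mem_setOf_eq] at hx
  by_contra hmem
  simp only [Set.mem_insert_iff, Set.mem_singleton_iff, not_or] at hmem
  exact hx (Equiv.swap_apply_of_ne_of_ne hmem.1 hmem.2)

/-- two even finitely supported permutations of ℕ are conjugate in `A_∞`
iff they are conjugate in `S_∞`. -/
theorem stmt0 (h h' : Equiv.Perm ℕ) (hh : MemAinf h) (hh' : MemAinf h') :
    ConjA h h' ↔ ConjS h h' := by
  constructor
  · rintro ⟨c, ⟨hcf, _⟩, hc⟩; exact ⟨c, hcf, hc⟩
  · rintro ⟨c, hcf, hc⟩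
    obtain ⟨l, hl, hlp⟩ := finsupp_prod_swaps hcf
    rcases Nat.even_or_odd l.length with hev | hod
    · exact ⟨c, ⟨hcf, l, hl, hev, hlp⟩, hc⟩
    · -- pick two points fixed by h
      obtain ⟨hfin, _⟩ := hh
      have hne : {x : ℕ | h x = x}.Infinite := by
        have := Set.Finite.infinite_compl hfin
        simpa [Set.compl_setOf] using this
      obtain ⟨a, ha⟩ := hne.nonempty
      obtain ⟨b, hb'⟩ := (hne.diff (Set.finite_singleton a)).nonempty
      have ha' : h a = a := ha
      have hb : h b = b := hb'.1
      have hab : a ≠ b := fun e => hb'.2 (by simp [← e])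
      have hτh : Equiv.swap a b * h * (Equiv.swap a b)⁻¹ = h := by
        rw [Equiv.swap_inv]
        ext x
        simp only [Equiv.Perm.mul_apply]
        rcases eq_or_ne x a with rfl | hxa
        · rw [Equiv.swap_apply_left, hb, Equiv.swap_apply_right, ha']
        rcases eq_or_ne x b with rfl | hxb
        · rw [Equiv.swap_apply_right, ha', Equiv.swap_apply_left, hb]
        · rw [Equiv.swap_apply_of_ne_of_ne hxa hxb]
          rcases eq_or_ne (h x) a with hha | hha
          · exact absurd (h.injective (hha.trans ha'.symm)) hxa
          rcases eq_or_ne (h x) b with hhb | hhb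
          · exact absurd (h.injective (hhb.trans hb.symm)) hxb
          · rw [Equiv.swap_apply_of_ne_of_ne hha hhb]
      refine ⟨c * Equiv.swap a b, ⟨?_, ?_⟩, ?_⟩
      · apply Set.Finite.subset (hcf.union (finsupp_swap a b))
        intro x hx
        by_contra hmem
        simp only [Set.mem_union, Set.mem_setOf_eq, not_or, not_not] at hmem
        exact hx (by simp [Equiv.Perm.mul_apply, hmem.1, hmem.2])
      · refine ⟨l ++ [Equiv.swap a b], ?_, ?_, by simp [hlp]⟩
        · intro τ hτ
          rcases List.mem_append.1 hτ with hm | hm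
          · exact hl τ hm
          · simp only [List.mem_singleton] at hm
            exact hm ▸ ⟨a, b, hab, rfl⟩
        · simpa using Odd.add_one hod
      · rw [mul_inv_rev, show c * Equiv.swap a b * h * ((Equiv.swap a b)⁻¹ * c⁻¹)
            = c * (Equiv.swap a b * h * (Equiv.swap a b)⁻¹) * c⁻¹ by group, hτh, hc]
end

section
/- For any nontrivial elements g and h of the infinite alternating group A_∞, every nontrivial g can be written as a finite product of conjugates of h and of h⁻¹; equivalently, the normal subgroup of A_∞ generated by any nontrivial element h is all of A_∞. -/
open Equiv Equiv.Perm

lemma finSupp_one : FinSupp 1 := by simp [FinSupp]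

lemma finSupp_mul {a b : Perm ℕ} (ha : FinSupp a) (hb : FinSupp b) : FinSupp (a * b) := by
  refine (ha.union hb).subset ?_
  intro x hx
  by_cases hbx : b x = x
  · left; simpa [Perm.mul_apply, hbx] using hx
  · right; exact hbx

lemma finSupp_inv {a : Perm ℕ} (ha : FinSupp a) : FinSupp a⁻¹ := by
  refine ha.subset ?_
  intro x hx hax
  refine hx ?_
  conv_lhs => rw [← hax]
  simp

lemma finSupp_swap (u v : ℕ) : FinSupp (Equiv.swap u v) := by
  refine ((Set.finite_singleton v).insert u).subset ?_
  intro x hx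
  by_contra hmem
  simp only [Set.mem_insert_iff, Set.mem_singleton_iff, not_or] at hmem
  exact hx (Equiv.swap_apply_of_ne_of_ne hmem.1 hmem.2)

lemma isEvenPerm_one : IsEvenPerm 1 := ⟨[], by simp, by simp, by simp⟩

lemma isEvenPerm_mul {a b : Perm ℕ} (ha : IsEvenPerm a) (hb : IsEvenPerm b) :
    IsEvenPerm (a * b) := by
  obtain ⟨la, hla, hea, hpa⟩ := ha
  obtain ⟨lb, hlb, heb, hpb⟩ := hb
  exact ⟨la ++ lb, by intro τ hτ; rcases List.mem_append.1 hτ with h | h; exacts [hla τ h, hlb τ h],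
    by simpa using hea.add heb, by simp [hpa, hpb]⟩

lemma isEvenPerm_inv {a : Perm ℕ} (ha : IsEvenPerm a) : IsEvenPerm a⁻¹ := by
  obtain ⟨l, hl, he, hp⟩ := ha
  refine ⟨(l.map fun x => x⁻¹).reverse, ?_, by simpa using he, ?_⟩
  · intro τ hτ
    simp only [List.mem_reverse, List.mem_map] at hτ
    obtain ⟨σ, hσ, rfl⟩ := hτ
    obtain ⟨u, v, huv, rfl⟩ := hl σ hσ
    exact ⟨u, v, huv, by simp⟩
  · rw [← List.prod_inv_reverse, hp]

lemma memAinf_one : MemAinf 1 := ⟨finSupp_one, isEvenPerm_one⟩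

lemma memAinf_mul {a b : Perm ℕ} (ha : MemAinf a) (hb : MemAinf b) : MemAinf (a * b) :=
  ⟨finSupp_mul ha.1 hb.1, isEvenPerm_mul ha.2 hb.2⟩

lemma memAinf_inv {a : Perm ℕ} (ha : MemAinf a) : MemAinf a⁻¹ :=
  ⟨finSupp_inv ha.1, isEvenPerm_inv ha.2⟩

lemma cls_inv {h x : Perm ℕ} (hx : x ∈ cls h) : x⁻¹ ∈ cls h := by
  rcases hx with ⟨c, hc, rfl⟩ | ⟨c, hc, rfl⟩
  · right; exact ⟨c, hc, by group⟩
  · left; exact ⟨c, hc, by group⟩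

lemma cls_conj {h x : Perm ℕ} (hx : x ∈ cls h) {c : Perm ℕ} (hc : MemAinf c) :
    c * x * c⁻¹ ∈ cls h := by
  rcases hx with ⟨c0, hc0, rfl⟩ | ⟨c0, hc0, rfl⟩
  · left; exact ⟨c * c0, memAinf_mul hc hc0, by group⟩
  · right; exact ⟨c * c0, memAinf_mul hc hc0, by group⟩

def clsSet (h : Perm ℕ) : Set (Perm ℕ) :=
  {x | ∃ l : List (Perm ℕ), (∀ y ∈ l, y ∈ cls h) ∧ l.prod = x}

lemma clsSet_mul {h x y : Perm ℕ} (hx : x ∈ clsSet h) (hy : y ∈ clsSet h) :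
    x * y ∈ clsSet h := by
  obtain ⟨l1, h1, rfl⟩ := hx
  obtain ⟨l2, h2, rfl⟩ := hy
  refine ⟨l1 ++ l2, ?_, by simp⟩
  intro z hz
  rcases List.mem_append.1 hz with h' | h'
  exacts [h1 z h', h2 z h']

lemma clsSet_inv {h x : Perm ℕ} (hx : x ∈ clsSet h) : x⁻¹ ∈ clsSet h := by
  obtain ⟨l, hl, rfl⟩ := hx
  refine ⟨(l.map fun y => y⁻¹).reverse, ?_, by rw [← List.prod_inv_reverse]⟩
  intro z hz
  simp only [List.mem_reverse, List.mem_map] at hz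
  obtain ⟨y, hy, rfl⟩ := hz
  exact cls_inv (hl y hy)

/-- The subgroup of products of elements of `cls h`. -/
def clsSubgroup (h : Perm ℕ) : Subgroup (Perm ℕ) where
  carrier := clsSet h
  one_mem' := ⟨[], by simp, by simp⟩
  mul_mem' := fun hx hy => clsSet_mul hx hy
  inv_mem' := fun hx => clsSet_inv hx

lemma mem_clsSubgroup_iff {h x : Perm ℕ} : x ∈ clsSubgroup h ↔ x ∈ clsSet h := Iff.rfl

lemma clsSet_conj {h x : Perm ℕ} (hx : x ∈ clsSet h) {c : Perm ℕ} (hc : MemAinf c) :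
    c * x * c⁻¹ ∈ clsSet h := by
  obtain ⟨l, hl, rfl⟩ := hx
  refine ⟨l.map fun y => c * y * c⁻¹, ?_, ?_⟩
  · intro z hz
    simp only [List.mem_map] at hz
    obtain ⟨y, hy, rfl⟩ := hz
    exact cls_conj (hl y hy) hc
  · rw [show (fun y => c * y * c⁻¹) = fun y => (MulAut.conj c).toMonoidHom y from rfl,
      ← MonoidHom.map_list_prod]
    rfl

/-- Extension homomorphism from permutations of a finset to permutations of `ℕ`. -/
def iT (T : Finset ℕ) : Perm {x : ℕ // x ∈ T} →* Perm ℕ :=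
  Equiv.Perm.extendDomainHom (Equiv.refl {x : ℕ // x ∈ T})

lemma finSupp_iT (T : Finset ℕ) (e : Perm {x : ℕ // x ∈ T}) : FinSupp (iT T e) := by
  refine T.finite_toSet.subset ?_
  intro x hx
  by_contra hxT
  rw [Finset.mem_coe] at hxT
  exact hx (Equiv.Perm.extendDomain_apply_not_subtype e _ hxT)

lemma iT_swap (T : Finset ℕ) (u v : {x : ℕ // x ∈ T}) :
    iT T (Equiv.swap u v) = Equiv.swap u.1 v.1 := by
  ext x
  by_cases hx : x ∈ T
  · rw [show (iT T) (Equiv.swap u v) = (Equiv.swap u v).extendDomain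
        (Equiv.refl {x : ℕ // x ∈ T}) from rfl,
      Equiv.Perm.extendDomain_apply_subtype _ _ hx]
    simp only [Equiv.refl_symm, Equiv.refl_apply]
    rcases eq_or_ne (⟨x, hx⟩ : {x : ℕ // x ∈ T}) u with h | hu
    · rw [h, Equiv.swap_apply_left]
      have : x = u.1 := congrArg Subtype.val h
      rw [this, Equiv.swap_apply_left]
    · rcases eq_or_ne (⟨x, hx⟩ : {x : ℕ // x ∈ T}) v with h | hv
      · rw [h, Equiv.swap_apply_right]
        have : x = v.1 := congrArg Subtype.val h
        rw [this, Equiv.swap_apply_right]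
      · rw [Equiv.swap_apply_of_ne_of_ne hu hv,
          Equiv.swap_apply_of_ne_of_ne (fun h => hu (Subtype.ext h)) (fun h => hv (Subtype.ext h))]
  · rw [show (iT T) (Equiv.swap u v) = (Equiv.swap u v).extendDomain
        (Equiv.refl {x : ℕ // x ∈ T}) from rfl,
      Equiv.Perm.extendDomain_apply_not_subtype _ _ hx,
      Equiv.swap_apply_of_ne_of_ne (fun h : x = u.1 => hx (h ▸ u.2)) (fun h : x = v.1 => hx (h ▸ v.2))]

lemma memAinf_iT (T : Finset ℕ) (e : Perm {x : ℕ // x ∈ T}) (he : Equiv.Perm.sign e = 1) :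
    MemAinf (iT T e) := by
  refine ⟨finSupp_iT T e, ?_⟩
  obtain ⟨l, hlprod, hlsw⟩ := (Equiv.Perm.truncSwapFactors e).out
  refine ⟨l.map ⇑(iT T), ?_, ?_, ?_⟩
  · intro τ hτ
    simp only [List.mem_map] at hτ
    obtain ⟨σ, hσ, rfl⟩ := hτ
    obtain ⟨u, v, huv, rfl⟩ := hlsw σ hσ
    rw [iT_swap]
    exact ⟨u.1, v.1, fun h => huv (Subtype.ext h), rfl⟩
  · rw [List.length_map]
    have hs := Equiv.Perm.sign_prod_list_swap hlsw
    rw [hlprod, he] at hs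
    exact (neg_one_pow_eq_one_iff_even
      (fun h => by simpa using congrArg (fun u : ℤˣ => (u : ℤ)) h)).1 hs.symm
  · rw [← map_list_prod (iT T) l, hlprod]

lemma exists_swap_finset : ∀ l : List (Perm ℕ), (∀ τ ∈ l, Equiv.Perm.IsSwap τ) →
    ∃ S : Finset ℕ, ∀ τ ∈ l, ∃ u v : ℕ, u ∈ S ∧ v ∈ S ∧ u ≠ v ∧ τ = Equiv.swap u v := by
  intro l
  induction l with
  | nil => exact fun _ => ⟨∅, by simp⟩
  | cons τ l ih =>
    intro hl
    obtain ⟨u, v, huv, rfl⟩ := hl _ List.mem_cons_self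
    obtain ⟨S, hS⟩ := ih (fun σ hσ => hl σ (List.mem_cons_of_mem _ hσ))
    refine ⟨insert u (insert v S), ?_⟩
    intro σ hσ
    rcases List.mem_cons.1 hσ with rfl | hσ
    · exact ⟨u, v, by simp, by simp, huv, rfl⟩
    · obtain ⟨u', v', hu', hv', huv', rfl⟩ := hS σ hσ
      exact ⟨u', v', by simp [hu'], by simp [hv'], huv', rfl⟩

lemma lift_swaps (T : Finset ℕ) :
    ∀ l : List (Perm ℕ), (∀ τ ∈ l, ∃ u v : ℕ, u ∈ T ∧ v ∈ T ∧ u ≠ v ∧ τ = Equiv.swap u v) →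
    ∃ l' : List (Perm {x : ℕ // x ∈ T}), l'.length = l.length ∧
      (∀ σ ∈ l', σ.IsSwap) ∧ iT T l'.prod = l.prod := by
  intro l
  induction l with
  | nil => exact fun _ => ⟨[], rfl, by simp, by simp⟩
  | cons τ l ih =>
    intro hl
    obtain ⟨u, v, hu, hv, huv, rfl⟩ := hl _ List.mem_cons_self
    obtain ⟨l', hlen, hsw, hprod⟩ := ih (fun σ hσ => hl σ (List.mem_cons_of_mem _ hσ))
    refine ⟨Equiv.swap ⟨u, hu⟩ ⟨v, hv⟩ :: l', by simp [hlen], ?_, ?_⟩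
    · intro σ hσ
      rcases List.mem_cons.1 hσ with rfl | hσ
      · exact ⟨_, _, fun h => huv (congrArg Subtype.val h), rfl⟩
      · exact hsw σ hσ
    · rw [List.prod_cons, List.prod_cons, map_mul, hprod, iT_swap]

lemma swap_identity {a b c : ℕ} (hab : a ≠ b) (hac : a ≠ c) (hbc : b ≠ c) :
    Equiv.swap b c * Equiv.swap a c = Equiv.swap a b * Equiv.swap b c := by
  ext x
  simp only [Equiv.Perm.mul_apply, Equiv.swap_apply_def]
  split_ifs <;> simp_all


/-- every nontrivial `g ∈ A_∞` is a finite product of `A_∞`-conjugates of a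
given nontrivial `h` and of `h⁻¹`. -/
theorem stmt3 (g h : Equiv.Perm ℕ) (hg : MemAinf g) (hh : MemAinf h)
    (hg1 : g ≠ 1) (hh1 : h ≠ 1) :
    ∃ l : List (Equiv.Perm ℕ), (∀ x ∈ l, x ∈ cls h) ∧ l.prod = g := by
  classical
  -- a point moved by h
  have hex : ∃ a, h a ≠ a := by
    by_contra hcon
    push_neg at hcon
    exact hh1 (Equiv.ext fun x => (hcon x).trans (Equiv.Perm.one_apply x).symm)
  obtain ⟨a, ha⟩ := hex
  set b := h a with hb
  have hba : b ≠ a := ha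
  -- fresh points c and d
  obtain ⟨c, hc⟩ := ((hh.1.union ((Set.finite_singleton b).insert a)).infinite_compl).nonempty
  simp only [Set.mem_compl_iff, Set.mem_union, Set.mem_insert_iff, Set.mem_singleton_iff,
    not_or, Set.mem_setOf_eq] at hc
  obtain ⟨hcsupp, hca, hcb⟩ := hc
  have hhc : h c = c := not_not.1 hcsupp
  obtain ⟨d, hd⟩ := ((hh.1.union ((Set.finite_singleton c).insert b |>.insert a)).infinite_compl).nonempty
  simp only [Set.mem_compl_iff, Set.mem_union, Set.mem_insert_iff, Set.mem_singleton_iff,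
    not_or, Set.mem_setOf_eq] at hd
  obtain ⟨hdsupp, hda, hdb, hdc⟩ := hd
  have hhd : h d = d := not_not.1 hdsupp
  have hab : a ≠ b := fun e => hba e.symm
  have hac : a ≠ c := fun e => hca e.symm
  have hbc : b ≠ c := fun e => hcb e.symm
  have hcd : c ≠ d := fun e => hdc e.symm
  -- the conjugator σ = (a c d)
  set σ := Equiv.swap a c * Equiv.swap c d with hσdef
  have hσA : MemAinf σ := by
    refine ⟨finSupp_mul (finSupp_swap a c) (finSupp_swap c d),
      ⟨[Equiv.swap a c, Equiv.swap c d], ?_, by simp, by simp [hσdef]⟩⟩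
    intro τ hτ
    rcases List.mem_cons.1 hτ with rfl | hτ
    · exact ⟨a, c, hac, rfl⟩
    · rcases List.mem_cons.1 hτ with rfl | hτ
      · exact ⟨c, d, hcd, rfl⟩
      · simp at hτ
  -- the commutator is the 3-cycle (a b c) = swap a b * swap b c
  have hk : h * (σ * h⁻¹ * σ⁻¹) = Equiv.swap a b * Equiv.swap b c := by
    have conj1 : h * σ * h⁻¹ = Equiv.swap b c * Equiv.swap c d := by
      have e1 : h * σ * h⁻¹ = (h * Equiv.swap a c * h⁻¹) * (h * Equiv.swap c d * h⁻¹) := by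
        rw [hσdef]; group
      rw [e1, ← Equiv.swap_apply_apply, ← Equiv.swap_apply_apply, hhc, hhd, ← hb]
    have e2 : h * (σ * h⁻¹ * σ⁻¹) = (h * σ * h⁻¹) * σ⁻¹ := by group
    rw [e2, conj1, hσdef, mul_inv_rev, Equiv.swap_inv, Equiv.swap_inv,
      mul_assoc, ← mul_assoc (Equiv.swap c d), Equiv.swap_mul_self, one_mul,
      swap_identity hab hac hbc]
  have hkP : h * (σ * h⁻¹ * σ⁻¹) ∈ clsSet h := by
    refine ⟨[h, σ * h⁻¹ * σ⁻¹], ?_, by simp [mul_assoc]⟩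
    intro z hz
    rcases List.mem_cons.1 hz with rfl | hz
    · left; exact ⟨1, memAinf_one, by group⟩
    · rcases List.mem_cons.1 hz with rfl | hz
      · right; exact ⟨σ, hσA, rfl⟩
      · simp at hz
  have htP : Equiv.swap a b * Equiv.swap b c ∈ clsSet h := hk ▸ hkP
  -- the window T
  obtain ⟨lg, hlg_swap, hlg_even, hlg_prod⟩ := hg.2
  obtain ⟨S, hS⟩ := exists_swap_finset lg hlg_swap
  obtain ⟨T, hST, haT, hbT, hcT, hcard⟩ :
      ∃ T : Finset ℕ, (∀ x ∈ S, x ∈ T) ∧ a ∈ T ∧ b ∈ T ∧ c ∈ T ∧ 5 ≤ T.card := by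
    refine ⟨(S ∪ {a, b, c}) ∪ Finset.range 5, ?_, by simp, by simp, by simp, ?_⟩
    · intro x hx; simp [hx]
    · calc 5 = (Finset.range 5).card := by simp
      _ ≤ ((S ∪ {a, b, c}) ∪ Finset.range 5).card :=
        Finset.card_le_card Finset.subset_union_right
  have h5 : 5 ≤ Fintype.card {x : ℕ // x ∈ T} := by rw [Fintype.card_coe]; exact hcard
  -- the three-cycle inside the window
  set a' : {x : ℕ // x ∈ T} := ⟨a, haT⟩
  set b' : {x : ℕ // x ∈ T} := ⟨b, hbT⟩
  set c' : {x : ℕ // x ∈ T} := ⟨c, hcT⟩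
  have ht3 : Equiv.Perm.IsThreeCycle (Equiv.swap a' b' * Equiv.swap b' c') := by
    rw [Equiv.swap_comm a' b']
    exact Equiv.Perm.isThreeCycle_swap_mul_swap_same
      (fun e => hab (congrArg Subtype.val e).symm)
      (fun e => hbc (congrArg Subtype.val e))
      (fun e => hac (congrArg Subtype.val e))
  have hιt : iT T (Equiv.swap a' b' * Equiv.swap b' c') = Equiv.swap a b * Equiv.swap b c := by
    rw [map_mul, iT_swap, iT_swap]
  -- lift g into the window
  obtain ⟨lg', hlen, hsw', hprod'⟩ := lift_swaps T lg (fun τ hτ => by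
    obtain ⟨u, v, hu, hv, huv, rfl⟩ := hS τ hτ
    exact ⟨u, v, hST u hu, hST v hv, huv, rfl⟩)
  have hsign : Equiv.Perm.sign lg'.prod = 1 := by
    rw [Equiv.Perm.sign_prod_list_swap hsw']
    exact (hlen ▸ hlg_even).neg_one_pow
  -- the normal closure argument in the finite alternating group
  set G := alternatingGroup {x : ℕ // x ∈ T}
  set t'' : G := ⟨Equiv.swap a' b' * Equiv.swap b' c', ht3.mem_alternatingGroup⟩ with ht''
  have hclos := ht3.alternating_normalClosure (by rw [Nat.card_eq_fintype_card]; exact h5)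
  have main : ∀ x : G, x ∈ Subgroup.normalClosure ({t''} : Set G) →
      iT T (x : Perm {x : ℕ // x ∈ T}) ∈ clsSet h := by
    intro x hx
    refine Subgroup.closure_induction (fun y hy => ?_) ?_
      (fun y z _ _ ihy ihz => ?_) (fun y _ ihy => ?_) hx
    · obtain ⟨a0, ha0, hconj⟩ := Group.mem_conjugatesOfSet_iff.1 hy
      rw [Set.mem_singleton_iff] at ha0
      subst ha0
      obtain ⟨u, hu⟩ := isConj_iff.1 hconj
      have hy2 : (y : Perm {x : ℕ // x ∈ T}) =
          (u : Perm _) * (Equiv.swap a' b' * Equiv.swap b' c') * (u : Perm _)⁻¹ := by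
        rw [← hu]; rfl
      rw [hy2, map_mul, map_mul, map_inv, hιt]
      exact clsSet_conj htP (memAinf_iT T _ (Equiv.Perm.mem_alternatingGroup.1 u.2))
    · have : ((1 : G) : Perm {x : ℕ // x ∈ T}) = 1 := rfl
      rw [this, map_one]
      exact ⟨[], by simp, by simp⟩
    · have : ((y * z : G) : Perm {x : ℕ // x ∈ T}) = (y : Perm _) * (z : Perm _) := rfl
      rw [this, map_mul]
      exact clsSet_mul ihy ihz
    · have : ((y⁻¹ : G) : Perm {x : ℕ // x ∈ T}) = (y : Perm _)⁻¹ := rfl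
      rw [this, map_inv]
      exact clsSet_inv ihy
  set g'' : G := ⟨lg'.prod, Equiv.Perm.mem_alternatingGroup.mpr hsign⟩
  have hfin : iT T lg'.prod ∈ clsSet h := main g'' (hclos ▸ Subgroup.mem_top g'')
  rw [hprod', hlg_prod] at hfin
  exact hfin
end

section
/- For any nontrivial finitely supported permutation h of ℕ, there exists a natural number ℓ with ℓ ≥ λ(h)/4 such that ι_{2ℓ}, the product of 2ℓ disjoint transpositions (1 2)(3 4)⋯(4ℓ−1 4ℓ), can be written as a product of two permutations each conjugate to h in S_∞. -/
section Stmt9Aux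

open Equiv

@[simp] lemma Equiv.Perm.apply_inv_self (f : Equiv.Perm ℕ) (x : ℕ) : f (f⁻¹ x) = x :=
  f.apply_symm_apply x

@[simp] lemma Equiv.Perm.inv_apply_self (f : Equiv.Perm ℕ) (x : ℕ) : f⁻¹ (f x) = x :=
  f.symm_apply_apply x

namespace Stmt9

/-! ### chains of transpositions -/

/-- the cycle `(x₁ x₂ … x_n)` as a chain of transpositions. -/
def chain : List ℕ → Equiv.Perm ℕ
  | [] => 1
  | [_] => 1
  | x :: y :: t => Equiv.swap x y * chain (y :: t)

def swapsProd (Tp : List (ℕ × ℕ)) : Equiv.Perm ℕ :=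
  (Tp.map fun p => Equiv.swap p.1 p.2).prod

def flat (Tp : List (ℕ × ℕ)) : List ℕ := Tp.flatMap fun p => [p.1, p.2]

@[simp] lemma swapsProd_nil : swapsProd [] = 1 := rfl

@[simp] lemma swapsProd_cons (p : ℕ × ℕ) (Tp : List (ℕ × ℕ)) :
    swapsProd (p :: Tp) = Equiv.swap p.1 p.2 * swapsProd Tp := by
  simp [swapsProd]

@[simp] lemma flat_nil : flat [] = [] := rfl

@[simp] lemma flat_cons (p : ℕ × ℕ) (Tp : List (ℕ × ℕ)) :
    flat (p :: Tp) = p.1 :: p.2 :: flat Tp := rfl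

lemma swapsProd_append (T₁ T₂ : List (ℕ × ℕ)) :
    swapsProd (T₁ ++ T₂) = swapsProd T₁ * swapsProd T₂ := by
  simp [swapsProd]

lemma flat_append (T₁ T₂ : List (ℕ × ℕ)) : flat (T₁ ++ T₂) = flat T₁ ++ flat T₂ := by
  simp [flat]

lemma chain_fix : ∀ (L : List ℕ) {x : ℕ}, x ∉ L → chain L x = x
  | [], x, _ => rfl
  | [_], x, _ => rfl
  | a :: b :: t, x, hx => by
      have h1 : x ∉ b :: t := fun h => hx (List.mem_cons_of_mem _ h)
      have hxa : x ≠ a := fun h => hx (h ▸ List.mem_cons_self)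
      have hxb : x ≠ b := fun h => hx (by simp [h])
      simp [chain, Equiv.Perm.mul_apply, chain_fix (b :: t) h1,
        Equiv.swap_apply_of_ne_of_ne hxa hxb]

lemma swapsProd_fix : ∀ (Tp : List (ℕ × ℕ)) {x : ℕ}, x ∉ flat Tp → swapsProd Tp x = x
  | [], x, _ => rfl
  | p :: T, x, hx => by
      have h1 : x ∉ flat T := fun h => hx (by simp [flat_cons, h])
      have hx1 : x ≠ p.1 := fun h => hx (by simp [h])
      have hx2 : x ≠ p.2 := fun h => hx (by simp [h])
      simp [swapsProd_cons, Equiv.Perm.mul_apply, swapsProd_fix T h1,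
        Equiv.swap_apply_of_ne_of_ne hx1 hx2]

lemma chain_conj (σ : Equiv.Perm ℕ) : ∀ L : List ℕ,
    σ * chain L * σ⁻¹ = chain (L.map σ)
  | [] => by simp [chain]
  | [a] => by simp [chain]
  | a :: b :: t => by
      have IH := chain_conj σ (b :: t)
      have h : σ * (Equiv.swap a b * chain (b :: t)) * σ⁻¹
          = (σ * Equiv.swap a b * σ⁻¹) * (σ * chain (b :: t) * σ⁻¹) := by group
      simp only [chain, List.map_cons] at *
      rw [h, IH, ← Equiv.swap_apply_apply]

lemma swapsProd_conj (σ : Equiv.Perm ℕ) : ∀ Tp : List (ℕ × ℕ),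
    σ * swapsProd Tp * σ⁻¹ = swapsProd (Tp.map fun p => (σ p.1, σ p.2))
  | [] => by simp
  | p :: T => by
      have IH := swapsProd_conj σ T
      have h : σ * (Equiv.swap p.1 p.2 * swapsProd T) * σ⁻¹
          = (σ * Equiv.swap p.1 p.2 * σ⁻¹) * (σ * swapsProd T * σ⁻¹) := by group
      simp only [swapsProd_cons, List.map_cons] at *
      rw [h, IH, ← Equiv.swap_apply_apply]

lemma chain_getElem : ∀ (L : List ℕ), L.Nodup → ∀ i : ℕ, (h2 : i + 1 < L.length) →
    chain L (L[i]'(by omega)) = L[i + 1]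
  | [], _, i, h2 => by simp at h2
  | [_], _, i, h2 => by simp at h2
  | a :: b :: t, hnd, 0, h2 => by
      have ha : a ∉ b :: t := (List.nodup_cons.mp hnd).1
      show (Equiv.swap a b * chain (b :: t)) a = b
      rw [Equiv.Perm.mul_apply, chain_fix _ ha, Equiv.swap_apply_left]
  | a :: b :: t, hnd, i + 1, h2 => by
      have hnd' : (b :: t).Nodup := (List.nodup_cons.mp hnd).2
      have ha : a ∉ b :: t := (List.nodup_cons.mp hnd).1
      have h2' : i + 1 < (b :: t).length := by simpa using h2
      have IH := chain_getElem (b :: t) hnd' i h2'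
      have hne1 : (b :: t)[i+1] ≠ a := fun h => ha (h ▸ List.getElem_mem _)
      have hne2 : (b :: t)[i+1] ≠ b := by
        intro h
        have h0 : (b :: t)[i+1] = (b :: t)[0]'(by simp) := by simpa using h
        have := (List.Nodup.getElem_inj_iff hnd').mp h0
        omega
      show (Equiv.swap a b * chain (b :: t)) ((b :: t)[i]) = (b :: t)[i+1]
      rw [Equiv.Perm.mul_apply, IH, Equiv.swap_apply_of_ne_of_ne hne1 hne2]

lemma chain_getLast : ∀ (L : List ℕ), L.Nodup → (hne : L ≠ []) →
    chain L (L.getLast hne) = L.head hne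
  | [], _, hne => absurd rfl hne
  | [a], _, _ => by simp [chain]
  | a :: b :: t, hnd, _ => by
      have hnd' : (b :: t).Nodup := (List.nodup_cons.mp hnd).2
      have ha : a ∉ b :: t := (List.nodup_cons.mp hnd).1
      have hlast : (a :: b :: t).getLast (by simp) = (b :: t).getLast (by simp) := by
        rw [List.getLast_cons]
      have IH := chain_getLast (b :: t) hnd' (by simp)
      simp only [chain, hlast, Equiv.Perm.mul_apply, IH]
      simp only [List.head_cons]
      exact Equiv.swap_apply_right a b

lemma chain_append : ∀ (L M : List ℕ) (hne : L ≠ []),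
    chain (L ++ M) = chain L * chain (L.getLast hne :: M)
  | [], _, hne => absurd rfl hne
  | [a], M, _ => by simp [chain]
  | a :: b :: t, M, _ => by
      have IH := chain_append (b :: t) M (by simp)
      have h : (a :: b :: t) ++ M = a :: b :: (t ++ M) := by simp
      rw [h]
      show Equiv.swap a b * chain (b :: (t ++ M)) = _
      rw [show (b :: (t ++ M)) = (b :: t) ++ M by simp, IH]
      simp [chain, List.getLast_cons, mul_assoc]

lemma chain_rotate : ∀ (L : List ℕ) (a : ℕ), a ∉ L → L.Nodup →
    chain (a :: L) = chain (L ++ [a])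
  | [], a, _, _ => by simp [chain]
  | [b], a, ha, _ => by
      simp [chain, Equiv.swap_comm]
  | b :: c :: t, a, ha, hnd => by
      have hab : a ≠ b := fun h => ha (by simp [h])
      have hac : a ≠ c := fun h => ha (by simp [h])
      have hbc : b ≠ c := by
        have := (List.nodup_cons.mp hnd).1; intro h; exact this (by simp [h])
      have ha' : a ∉ c :: t := fun h => ha (List.mem_cons_of_mem _ h)
      have hnd' : (c :: t).Nodup := (List.nodup_cons.mp hnd).2
      have IH := chain_rotate (c :: t) a ha' hnd'
      show Equiv.swap a b * chain (b :: c :: t) = chain (b :: (c :: t ++ [a]))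
      have h1 : chain (b :: (c :: t ++ [a]))
          = Equiv.swap b c * chain (c :: (t ++ [a])) := rfl
      have h2 : chain (c :: (t ++ [a])) = chain ((c :: t) ++ [a]) := by simp
      rw [h1, h2, ← IH]
      show Equiv.swap a b * (Equiv.swap b c * chain (c :: t))
        = Equiv.swap b c * (Equiv.swap a c * chain (c :: t))
      rw [← mul_assoc, ← mul_assoc]
      congr 1
      have key := Equiv.swap_mul_swap_mul_swap (x := a) (y := b) (z := c) hab hac
      calc Equiv.swap a b * Equiv.swap b c
          = Equiv.swap b c * (Equiv.swap b c * Equiv.swap a b * Equiv.swap b c) := by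
            rw [← mul_assoc, ← mul_assoc, Equiv.swap_mul_self, one_mul]
        _ = Equiv.swap b c * Equiv.swap c a := by rw [key]
        _ = Equiv.swap b c * Equiv.swap a c := by rw [Equiv.swap_comm c a]

/-- the key 5-point splice identity. -/
lemma five_id {z s1 s2 s3 s4 : ℕ} (h1 : z ≠ s1) (h2 : z ≠ s2) (h3 : z ≠ s3) (h4 : z ≠ s4)
    (h12 : s1 ≠ s2) (h13 : s1 ≠ s3) (h14 : s1 ≠ s4) (h23 : s2 ≠ s3) (h24 : s2 ≠ s4)
    (h34 : s3 ≠ s4) :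
    chain [z, s1, s2, s3, s4] * chain [z, s4, s1, s2, s3]
      = Equiv.swap s1 s3 * Equiv.swap s2 s4 := by
  ext x
  simp only [chain, mul_one, Equiv.Perm.mul_apply]
  by_cases e0 : x = z
  · subst e0
    simp [Equiv.swap_apply_def, h1, h2, h3, h4, h12, h13, h14, h23, h24, h34,
      h1.symm, h2.symm, h3.symm, h4.symm, h12.symm, h13.symm, h14.symm, h23.symm,
      h24.symm, h34.symm]
  by_cases e1 : x = s1
  · subst e1
    simp [Equiv.swap_apply_def, h1, h2, h3, h4, h12, h13, h14, h23, h24, h34,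
      h1.symm, h2.symm, h3.symm, h4.symm, h12.symm, h13.symm, h14.symm, h23.symm,
      h24.symm, h34.symm]
  by_cases e2 : x = s2
  · subst e2
    simp [Equiv.swap_apply_def, h1, h2, h3, h4, h12, h13, h14, h23, h24, h34,
      h1.symm, h2.symm, h3.symm, h4.symm, h12.symm, h13.symm, h14.symm, h23.symm,
      h24.symm, h34.symm]
  by_cases e3 : x = s3
  · subst e3
    simp [Equiv.swap_apply_def, h1, h2, h3, h4, h12, h13, h14, h23, h24, h34,
      h1.symm, h2.symm, h3.symm, h4.symm, h12.symm, h13.symm, h14.symm, h23.symm,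
      h24.symm, h34.symm]
  by_cases e4 : x = s4
  · subst e4
    simp [Equiv.swap_apply_def, h1, h2, h3, h4, h12, h13, h14, h23, h24, h34,
      h1.symm, h2.symm, h3.symm, h4.symm, h12.symm, h13.symm, h14.symm, h23.symm,
      h24.symm, h34.symm]
  · simp [Equiv.swap_apply_def, e0, e1, e2, e3, e4]

/-! ### Forall₂ helpers and `buildMap` -/

lemma forall₂_imp_mem {α β : Type*} {R S : α → β → Prop} :
    ∀ {s : List α} {t : List β}, List.Forall₂ R s t →
      (∀ x ∈ s, ∀ y ∈ t, R x y → S x y) → List.Forall₂ S s t := by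
  intro s t h
  induction h with
  | nil => intro _; exact List.Forall₂.nil
  | cons hab h ih =>
    intro himp
    exact List.Forall₂.cons (himp _ (by simp) _ (by simp) hab)
      (ih fun x hx y hy => himp x (by simp [hx]) y (by simp [hy]))

lemma forall₂_eq_map {α β : Type*} {f : α → β} :
    ∀ {s : List α} {t : List β}, List.Forall₂ (fun a b => f a = b) s t → s.map f = t := by
  intro s t h
  induction h with
  | nil => rfl
  | cons hab _ ih => simp [hab, ih]

lemma buildMap (src tgt : List ℕ) (hs : src.Nodup) (ht : tgt.Nodup)
    (hdisj : ∀ x ∈ src, x ∉ tgt) (hlen : src.length = tgt.length) :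
    ∃ ρ : Equiv.Perm ℕ, (∀ x, ρ x ≠ x → x ∈ src ∨ x ∈ tgt) ∧
      List.Forall₂ (fun a b => ρ a = b) src tgt := by
  induction src generalizing tgt with
  | nil =>
    cases tgt with
    | nil => exact ⟨1, by simp, List.Forall₂.nil⟩
    | cons b t => simp at hlen
  | cons a s ih =>
    cases tgt with
    | nil => simp at hlen
    | cons b t =>
      have hs' : s.Nodup := (List.nodup_cons.mp hs).2
      have ha : a ∉ s := (List.nodup_cons.mp hs).1
      have ht' : t.Nodup := (List.nodup_cons.mp ht).2
      have hb : b ∉ t := (List.nodup_cons.mp ht).1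
      have hanotint : a ∉ t := fun h => hdisj a (by simp) (List.mem_cons_of_mem _ h)
      have hdisj' : ∀ x ∈ s, x ∉ t := fun x hx hxt =>
        hdisj x (List.mem_cons_of_mem _ hx) (List.mem_cons_of_mem _ hxt)
      obtain ⟨ρ', hρ'supp, hρ'f⟩ := ih t hs' ht' hdisj' (by simpa using hlen)
      refine ⟨Equiv.swap a b * ρ', ?_, ?_⟩
      · intro x hx
        by_cases hxs : x ∈ a :: s
        · exact Or.inl hxs
        by_cases hxt : x ∈ b :: t
        · exact Or.inr hxt
        · exfalso
          have h1 : ρ' x = x := by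
            by_contra hne
            rcases hρ'supp x hne with h | h
            · exact hxs (List.mem_cons_of_mem _ h)
            · exact hxt (List.mem_cons_of_mem _ h)
          rw [Equiv.Perm.mul_apply, h1] at hx
          have hxa : x ≠ a := fun h => hxs (by simp [h])
          have hxb : x ≠ b := fun h => hxt (by simp [h])
          exact hx (Equiv.swap_apply_of_ne_of_ne hxa hxb)
      · refine List.Forall₂.cons ?_ ?_
        · have h1 : ρ' a = a := by
            by_contra hne
            rcases hρ'supp a hne with h | h
            · exact ha h
            · exact hanotint h
          rw [Equiv.Perm.mul_apply, h1, Equiv.swap_apply_left]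
        · refine forall₂_imp_mem hρ'f ?_
          intro x hx y hy hxy
          have hya : y ≠ a := fun h => hanotint (h ▸ hy)
          have hyb : y ≠ b := fun h => hb (h ▸ hy)
          rw [Equiv.Perm.mul_apply, hxy, Equiv.swap_apply_of_ne_of_ne hya hyb]

lemma conj_fix {ρ g : Equiv.Perm ℕ} (hfix : ∀ x, g x ≠ x → ρ x = x) :
    ρ * g * ρ⁻¹ = g := by
  ext y
  by_cases hy : g y = y
  · by_cases hw : g (ρ⁻¹ y) = ρ⁻¹ y
    · rw [Equiv.Perm.mul_apply, Equiv.Perm.mul_apply, hw, Equiv.Perm.apply_inv_self, hy]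
    · exfalso
      have h1 : ρ (ρ⁻¹ y) = ρ⁻¹ y := hfix _ hw
      have h2 : ρ (ρ⁻¹ y) = y := Equiv.Perm.apply_inv_self _ _
      have h3 : ρ⁻¹ y = y := by rw [← h1, h2]
      rw [h3] at hw
      exact hw hy
  · have h1 : ρ y = y := hfix _ hy
    have h1' : ρ⁻¹ y = y := by
      have := congrArg (fun w => ρ⁻¹ w) h1
      simpa using this.symm
    have h2 : ρ (g y) = g y := hfix _ (by
      intro h
      exact hy (g.injective (by rw [h])))
    simp [Equiv.Perm.mul_apply, h1', h2]

lemma commute_of_disjoint {f g : Equiv.Perm ℕ} (h : ∀ x, f x = x ∨ g x = x) :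
    f * g = g * f :=
  Equiv.Perm.Disjoint.commute h


/-! ### gadgets -/

/-- Gadget with splice invariant. -/
def GadgetI (n : ℕ) : Prop :=
  ∃ (La Lb : List ℕ) (Tp : List (ℕ × ℕ)) (K : ℕ),
    La.length = n ∧ Lb.length = n ∧ La.Nodup ∧ Lb.Nodup ∧
    (∀ q ∈ La, q < K) ∧ (∀ q ∈ Lb, q < K) ∧ (∀ q ∈ flat Tp, q < K) ∧
    (flat Tp).Nodup ∧ Even Tp.length ∧ n - 1 ≤ 2 * Tp.length ∧
    chain La * chain Lb = swapsProd Tp ∧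
    ∀ (ha : La ≠ []) (hb : Lb ≠ []), chain Lb (Lb.getLast hb) = La.getLast ha

lemma eq_of_eval (La Lb : List ℕ) (Tp : List (ℕ × ℕ)) (K : ℕ)
    (bnda : ∀ q ∈ La, q < K) (bndb : ∀ q ∈ Lb, q < K) (bndt : ∀ q ∈ flat Tp, q < K)
    (heval : ∀ x < K, (chain La * chain Lb) x = swapsProd Tp x) :
    chain La * chain Lb = swapsProd Tp := by
  ext x
  rcases lt_or_ge x K with h | h
  · exact heval x h
  · have hxa : x ∉ La := fun hm => absurd (bnda x hm) (by omega)
    have hxb : x ∉ Lb := fun hm => absurd (bndb x hm) (by omega)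
    have hxt : x ∉ flat Tp := fun hm => absurd (bndt x hm) (by omega)
    rw [Equiv.Perm.mul_apply, chain_fix _ hxb, chain_fix _ hxa, swapsProd_fix _ hxt]

lemma gadgetI_three : GadgetI 3 := by
  refine ⟨[0,1,2], [2,3,1], [(0,1),(2,3)], 4, by simp, by simp, by decide, by decide,
    by decide, by decide, by decide, by decide, by decide, by decide, ?_, ?_⟩
  · apply eq_of_eval _ _ _ 4 (by decide) (by decide) (by decide)
    intro x hx
    interval_cases x <;> decide
  · intro ha hb
    simp only [List.getLast]
    decide

lemma gadgetI_four : GadgetI 4 := by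
  refine ⟨[0,2,1,3], [3,0,2,1], [(0,1),(2,3)], 4, by simp, by simp, by decide, by decide,
    by decide, by decide, by decide, by decide, by decide, by decide, ?_, ?_⟩
  · apply eq_of_eval _ _ _ 4 (by decide) (by decide) (by decide)
    intro x hx
    interval_cases x <;> decide
  · intro ha hb
    simp only [List.getLast]
    decide

lemma gadgetI_five : GadgetI 5 := by
  refine ⟨[0,2,1,3,4], [4,3,0,2,1], [(0,1),(2,3)], 5, by simp, by simp, by decide, by decide,
    by decide, by decide, by decide, by decide, by decide, by decide, ?_, ?_⟩
  · apply eq_of_eval _ _ _ 5 (by decide) (by decide) (by decide)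
    intro x hx
    interval_cases x <;> decide
  · intro ha hb
    simp only [List.getLast]
    decide

lemma gadgetI_six : GadgetI 6 := by
  refine ⟨[0,1,2,3,4,6], [6,7,4,5,3,1], [(0,1),(2,3),(4,5),(6,7)], 8, by simp, by simp,
    by decide, by decide, by decide, by decide, by decide, by decide, by decide, by decide,
    ?_, ?_⟩
  · apply eq_of_eval _ _ _ 8 (by decide) (by decide) (by decide)
    intro x hx
    interval_cases x <;> decide
  · intro ha hb
    simp only [List.getLast]
    decide


/-- general rotation: `chain (P ++ Q) = chain (Q ++ P)` for nodup lists. -/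
lemma chain_rotate_append : ∀ (P Q : List ℕ), (P ++ Q).Nodup →
    chain (P ++ Q) = chain (Q ++ P)
  | [], Q, _ => by simp
  | a :: P', Q, hnd => by
      have hnd' : (P' ++ Q).Nodup := by
        rw [List.cons_append, List.nodup_cons] at hnd
        exact hnd.2
      have ha : a ∉ P' ++ Q := by
        rw [List.cons_append, List.nodup_cons] at hnd
        exact hnd.1
      have h1 : (a :: P') ++ Q = a :: (P' ++ Q) := by simp
      rw [h1, chain_rotate _ a ha hnd']
      have h2 : P' ++ Q ++ [a] = P' ++ (Q ++ [a]) := by simp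
      rw [h2]
      have hnd2 : (P' ++ (Q ++ [a])).Nodup := by
        rw [List.nodup_append'] at hnd' ⊢
        refine ⟨hnd'.1, ?_, ?_⟩
        · rw [List.nodup_append']
          refine ⟨hnd'.2.1, by simp, ?_⟩
          intro q hq hq'
          simp at hq'
          exact ha (by simp [hq'] at hq ⊢; exact Or.inr hq)
        · intro q hq hq'
          rw [List.mem_append] at hq'
          rcases hq' with hq' | hq'
          · exact hnd'.2.2 hq hq'
          · simp at hq'
            exact ha (by simp [hq'] at hq ⊢; exact Or.inl hq)
      have IH := chain_rotate_append P' (Q ++ [a]) hnd2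
      rw [IH]
      congr 1
      simp

/-- splice step: from a gadget for `n` to one for `n + 4`. -/
lemma gadgetI_splice {n : ℕ} (hn : 3 ≤ n) (G : GadgetI n) : GadgetI (n + 4) := by
  obtain ⟨La, Lb, Tp, K, la, lb, nda, ndb, bna, bnb, bnt, ndt, hev, hcnt, heq, hinv⟩ := G
  have hane : La ≠ [] := by
    intro h; rw [h] at la; simp at la; omega
  have hbne : Lb ≠ [] := by
    intro h; rw [h] at lb; simp at lb; omega
  set x := La.getLast hane with hxdef
  set z := Lb.getLast hbne with hzdef
  have hxK : x < K := bna _ (List.getLast_mem hane)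
  have hzK : z < K := bnb _ (List.getLast_mem hbne)
  set A := chain La with hA
  set B := chain Lb with hB
  have hBz : B z = x := hinv hane hbne
  -- fresh points
  set s1 := K with hs1
  set s2 := K + 1 with hs2
  set s3 := K + 2 with hs3
  set s4 := K + 3 with hs4
  have hs1La : s1 ∉ La := fun h => by have := bna _ h; omega
  have hs2La : s2 ∉ La := fun h => by have := bna _ h; omega
  have hs3La : s3 ∉ La := fun h => by have := bna _ h; omega
  have hs4La : s4 ∉ La := fun h => by have := bna _ h; omega
  have hs1Lb : s1 ∉ Lb := fun h => by have := bnb _ h; omega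
  have hs2Lb : s2 ∉ Lb := fun h => by have := bnb _ h; omega
  have hs3Lb : s3 ∉ Lb := fun h => by have := bnb _ h; omega
  have hs4Lb : s4 ∉ Lb := fun h => by have := bnb _ h; omega
  -- the new lists
  refine ⟨[s2, s3, s4] ++ La ++ [s1], [s1, s2, s3] ++ Lb ++ [s4],
    Tp ++ [(s1, s3), (s2, s4)], K + 4, ?_, ?_, ?_, ?_, ?_, ?_, ?_, ?_, ?_, ?_, ?_, ?_⟩
  · simp [la]
  · simp [lb]
  · -- Nodup La'
    rw [List.append_assoc, List.nodup_append']
    refine ⟨by simp; omega, ?_, ?_⟩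
    · rw [List.nodup_append']
      exact ⟨nda, by simp, fun q hq hq' => by simp at hq'; have := bna _ hq; omega⟩
    · intro q hq hq'
      simp at hq
      rw [List.mem_append] at hq'
      rcases hq' with hq' | hq'
      · have := bna _ hq'; omega
      · simp at hq'; omega
  · -- Nodup Lb'
    rw [List.append_assoc, List.nodup_append']
    refine ⟨by simp; omega, ?_, ?_⟩
    · rw [List.nodup_append']
      exact ⟨ndb, by simp, fun q hq hq' => by simp at hq'; have := bnb _ hq; omega⟩
    · intro q hq hq'
      simp at hq
      rw [List.mem_append] at hq'
      rcases hq' with hq' | hq'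
      · have := bnb _ hq'; omega
      · simp at hq'; omega
  · -- bounds La'
    intro q hq
    simp only [List.append_assoc, List.mem_append] at hq
    rcases hq with hq | hq | hq
    · simp at hq; omega
    · have := bna _ hq; omega
    · simp at hq; omega
  · -- bounds Lb'
    intro q hq
    simp only [List.append_assoc, List.mem_append] at hq
    rcases hq with hq | hq | hq
    · simp at hq; omega
    · have := bnb _ hq; omega
    · simp at hq; omega
  · -- bounds flat Tp'
    intro q hq
    rw [flat_append] at hq
    rcases List.mem_append.mp hq with hq | hq
    · have := bnt _ hq; omega
    · simp [flat] at hq; omega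
  · -- Nodup flat Tp'
    rw [flat_append, List.nodup_append']
    refine ⟨ndt, by simp [flat]; omega, ?_⟩
    intro q hq hq'
    have := bnt _ hq
    simp [flat] at hq'
    omega
  · -- Even
    simp only [List.length_append]
    exact hev.add (by simp)
  · -- count
    simp only [List.length_append]
    simp only [List.length_cons, List.length_nil]
    omega
  · -- the main product equation
    have hrotA : chain ([s2, s3, s4] ++ La ++ [s1]) = chain (La ++ [s1, s2, s3, s4]) := by
      have hnd : ([s2, s3, s4] ++ (La ++ [s1])).Nodup := by
        rw [List.nodup_append']
        refine ⟨by simp; omega, ?_, ?_⟩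
        · rw [List.nodup_append']
          exact ⟨nda, by simp, fun q hq hq' => by simp at hq'; have := bna _ hq; omega⟩
        · intro q hq hq'
          simp at hq
          rcases List.mem_append.mp hq' with h | h
          · have := bna _ h; omega
          · simp at h; omega
      rw [List.append_assoc]
      rw [chain_rotate_append _ _ hnd]
      congr 1
      simp
    have hrotB : chain ([s1, s2, s3] ++ Lb ++ [s4]) = chain (Lb ++ [s4, s1, s2, s3]) := by
      have hnd : ([s1, s2, s3] ++ (Lb ++ [s4])).Nodup := by
        rw [List.nodup_append']
        refine ⟨by simp; omega, ?_, ?_⟩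
        · rw [List.nodup_append']
          exact ⟨ndb, by simp, fun q hq hq' => by simp at hq'; have := bnb _ hq; omega⟩
        · intro q hq hq'
          simp at hq
          rcases List.mem_append.mp hq' with h | h
          · have := bnb _ h; omega
          · simp at h; omega
      rw [List.append_assoc]
      rw [chain_rotate_append _ _ hnd]
      congr 1
      simp
    have happA : chain (La ++ [s1, s2, s3, s4]) = A * chain (x :: [s1, s2, s3, s4]) :=
      chain_append La _ hane
    have happB : chain (Lb ++ [s4, s1, s2, s3]) = B * chain (z :: [s4, s1, s2, s3]) :=
      chain_append Lb _ hbne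
    set δ := chain (x :: [s1, s2, s3, s4]) with hδ
    set ε := chain (z :: [s4, s1, s2, s3]) with hε
    have hBs1 : B s1 = s1 := chain_fix _ hs1Lb
    have hBinvx : B⁻¹ x = z := by rw [← hBz, Equiv.Perm.inv_apply_self]
    have hBinvs1 : B⁻¹ s1 = s1 := by
      nth_rewrite 1 [← hBs1]; rw [Equiv.Perm.inv_apply_self]
    have hBs2 : B s2 = s2 := chain_fix _ hs2Lb
    have hBinvs2 : B⁻¹ s2 = s2 := by
      nth_rewrite 1 [← hBs2]; rw [Equiv.Perm.inv_apply_self]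
    have hBs3 : B s3 = s3 := chain_fix _ hs3Lb
    have hBinvs3 : B⁻¹ s3 = s3 := by
      nth_rewrite 1 [← hBs3]; rw [Equiv.Perm.inv_apply_self]
    have hBs4 : B s4 = s4 := chain_fix _ hs4Lb
    have hBinvs4 : B⁻¹ s4 = s4 := by
      nth_rewrite 1 [← hBs4]; rw [Equiv.Perm.inv_apply_self]
    have hconj : B⁻¹ * δ * B = chain [z, s1, s2, s3, s4] := by
      have := chain_conj B⁻¹ (x :: [s1, s2, s3, s4])
      rw [inv_inv] at this
      rw [this]
      simp only [List.map_cons, List.map_nil]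
      rw [hBinvx, hBinvs1, hBinvs2, hBinvs3, hBinvs4]
    have hfive : chain [z, s1, s2, s3, s4] * ε = Equiv.swap s1 s3 * Equiv.swap s2 s4 := by
      rw [hε]
      exact five_id (by omega) (by omega) (by omega) (by omega) (by omega) (by omega)
        (by omega) (by omega) (by omega) (by omega)
    calc chain ([s2, s3, s4] ++ La ++ [s1]) * chain ([s1, s2, s3] ++ Lb ++ [s4])
        = (A * δ) * (B * ε) := by rw [hrotA, hrotB, happA, happB]
      _ = (A * B) * ((B⁻¹ * δ * B) * ε) := by group
      _ = (A * B) * (chain [z, s1, s2, s3, s4] * ε) := by rw [hconj]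
      _ = swapsProd Tp * (Equiv.swap s1 s3 * Equiv.swap s2 s4) := by rw [heq, hfive]
      _ = swapsProd (Tp ++ [(s1, s3), (s2, s4)]) := by
          rw [swapsProd_append]
          simp [swapsProd]
  · -- the invariant
    intro ha' hb'
    have hlastB : (([s1, s2, s3] ++ Lb ++ [s4]).getLast hb') = s4 := by
      rw [List.getLast_append_of_ne_nil (h₂ := by simp)]
      rfl
    have hlastA : (([s2, s3, s4] ++ La ++ [s1]).getLast ha') = s1 := by
      rw [List.getLast_append_of_ne_nil (h₂ := by simp)]
      rfl
    rw [hlastA, hlastB]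
    -- chain Lb' s4 = s1
    have hrotB : chain ([s1, s2, s3] ++ Lb ++ [s4]) = chain (Lb ++ [s4, s1, s2, s3]) := by
      have hnd : ([s1, s2, s3] ++ (Lb ++ [s4])).Nodup := by
        rw [List.nodup_append']
        refine ⟨by simp; omega, ?_, ?_⟩
        · rw [List.nodup_append']
          exact ⟨ndb, by simp, fun q hq hq' => by simp at hq'; have := bnb _ hq; omega⟩
        · intro q hq hq'
          simp at hq
          rcases List.mem_append.mp hq' with h | h
          · have := bnb _ h; omega
          · simp at h; omega
      rw [List.append_assoc]
      rw [chain_rotate_append _ _ hnd]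
      congr 1
      simp
    have happB : chain (Lb ++ [s4, s1, s2, s3]) = B * chain (z :: [s4, s1, s2, s3]) :=
      chain_append Lb _ hbne
    rw [hrotB, happB]
    have hndeps : (z :: [s4, s1, s2, s3]).Nodup := by simp; omega
    have heps4 : chain (z :: [s4, s1, s2, s3]) s4 = s1 := by
      have := chain_getElem (z :: [s4, s1, s2, s3]) hndeps 1 (by simp)
      simpa using this
    rw [Equiv.Perm.mul_apply, heps4]
    exact chain_fix _ hs1Lb



lemma gadgetI_all : ∀ n, 3 ≤ n → GadgetI n := by
  intro n
  induction n using Nat.strong_induction_on with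
  | _ n IH =>
    intro hn
    rcases lt_or_ge n 7 with h7 | h7
    · interval_cases n
      · exact gadgetI_three
      · exact gadgetI_four
      · exact gadgetI_five
      · exact gadgetI_six
    · have G := IH (n - 4) (by omega) (by omega)
      have := gadgetI_splice (by omega) G
      rwa [show n - 4 + 4 = n by omega] at this

/-- Gadget without the splice invariant (valid for all `n ≥ 2`). -/
def Gadget (n : ℕ) : Prop :=
  ∃ (La Lb : List ℕ) (Tp : List (ℕ × ℕ)) (K : ℕ),
    La.length = n ∧ Lb.length = n ∧ La.Nodup ∧ Lb.Nodup ∧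
    (∀ q ∈ La, q < K) ∧ (∀ q ∈ Lb, q < K) ∧ (∀ q ∈ flat Tp, q < K) ∧
    (flat Tp).Nodup ∧ Even Tp.length ∧ n - 1 ≤ 2 * Tp.length ∧
    chain La * chain Lb = swapsProd Tp

lemma gadget_all : ∀ n, 2 ≤ n → Gadget n := by
  intro n hn
  rcases eq_or_lt_of_le hn with h2 | h3
  · refine ⟨[0, 1], [2, 3], [(0, 1), (2, 3)], 4, by simp [← h2], by simp [← h2],
      by decide, by decide, by decide, by decide, by decide, by decide, by decide,
      by simp [← h2], ?_⟩
    apply eq_of_eval _ _ _ 4 (by decide) (by decide) (by decide)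
    intro x hx
    interval_cases x <;> decide
  · obtain ⟨La, Lb, Tp, K, la, lb, nda, ndb, bna, bnb, bnt, ndt, hev, hcnt, heq, _⟩ :=
      gadgetI_all n h3
    exact ⟨La, Lb, Tp, K, la, lb, nda, ndb, bna, bnb, bnt, ndt, hev, hcnt, heq⟩


/-! ### swap factorisations of chains -/

def chainSwaps (L : List ℕ) : List (Equiv.Perm ℕ) :=
  (L.zip L.tail).map fun p => Equiv.swap p.1 p.2

lemma chainSwaps_prod : ∀ L : List ℕ, (chainSwaps L).prod = chain L
  | [] => rfl
  | [_] => rfl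
  | x :: y :: t => by
      have IH := chainSwaps_prod (y :: t)
      simp only [chainSwaps, chain] at *
      simp only [List.tail_cons, List.zip_cons_cons, List.map_cons, List.prod_cons]
      rw [← IH]
      rfl

lemma chainSwaps_length : ∀ L : List ℕ, (chainSwaps L).length = L.length - 1
  | [] => rfl
  | [_] => rfl
  | x :: y :: t => by
      simp [chainSwaps]

lemma chainSwaps_isSwap : ∀ L : List ℕ, L.Nodup → ∀ τ ∈ chainSwaps L, τ.IsSwap
  | [], _, τ, hτ => by simp [chainSwaps] at hτ
  | [_], _, τ, hτ => by simp [chainSwaps] at hτ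
  | x :: y :: t, hnd, τ, hτ => by
      have hxy : x ≠ y := by
        have := (List.nodup_cons.mp hnd).1
        intro h; exact this (by simp [h])
      simp only [chainSwaps, List.tail_cons, List.zip_cons_cons, List.map_cons,
        List.mem_cons] at hτ
      rcases hτ with h | h
      · exact ⟨x, y, hxy, h⟩
      · exact chainSwaps_isSwap (y :: t) (List.nodup_cons.mp hnd).2 τ (by
          simpa [chainSwaps] using h)

/-! ### orbits -/

lemma orbit_decomp (h : Equiv.Perm ℕ) (s : Finset ℕ) (hsupp : ∀ x, h x ≠ x → x ∈ s)
    (x₀ : ℕ) (hx₀ : h x₀ ≠ x₀) :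
    ∃ L : List ℕ, L.Nodup ∧ 2 ≤ L.length ∧ (∀ y ∈ L, h y ≠ y) ∧ x₀ ∈ L ∧
      (∀ y ∈ L, chain L y = h y) ∧ (∀ y, y ∉ L → h y ∉ L) := by
  have aux : ∀ i : ℕ, h ((h ^ i) x₀) ≠ (h ^ i) x₀ := by
    intro i
    have hcomm : h * h ^ i = h ^ i * h := (Commute.self_pow h i).eq
    have : h ((h ^ i) x₀) = (h ^ i) (h x₀) := by
      have := congrArg (fun σ : Equiv.Perm ℕ => σ x₀) hcomm
      simpa [Equiv.Perm.mul_apply] using this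
    rw [this]
    exact fun hh => hx₀ ((h ^ i).injective hh)
  have hperiod : ∀ i j : ℕ, i < j → (h ^ i) x₀ = (h ^ j) x₀ → (h ^ (j - i)) x₀ = x₀ := by
    intro i j hij heq
    have h1 : h ^ j = h ^ (j - i) * h ^ i := by
      rw [← pow_add]; congr 1; omega
    have h2 : (h ^ (j - i)) ((h ^ i) x₀) = (h ^ i) x₀ := by
      rw [← Equiv.Perm.mul_apply, ← h1, ← heq]
    have hcomm : h ^ (j - i) * h ^ i = h ^ i * h ^ (j - i) := by
      rw [← pow_add, ← pow_add]; congr 1; omega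
    have h3 : (h ^ (j - i)) ((h ^ i) x₀) = (h ^ i) ((h ^ (j - i)) x₀) := by
      have := congrArg (fun σ : Equiv.Perm ℕ => σ x₀) hcomm
      simpa [Equiv.Perm.mul_apply] using this
    rw [h3] at h2
    exact (h ^ i).injective h2
  have hexists : ∃ k : ℕ, 0 < k ∧ (h ^ k) x₀ = x₀ := by
    have hcard : Fintype.card ↥s < Fintype.card (Fin (s.card + 1)) := by
      simp [Fintype.card_coe]
    obtain ⟨i, j, hne, heq⟩ := Fintype.exists_ne_map_eq_of_card_lt
      (fun i : Fin (s.card + 1) => (⟨(h ^ (i : ℕ)) x₀, hsupp _ (aux i)⟩ : ↥s)) hcard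
    have heq' : (h ^ (i : ℕ)) x₀ = (h ^ (j : ℕ)) x₀ := by
      simpa using congrArg Subtype.val heq
    rcases lt_or_gt_of_ne (fun hc : (i : ℕ) = (j : ℕ) => hne (Fin.ext hc)) with hij | hij
    · exact ⟨(j : ℕ) - (i : ℕ), by omega, hperiod _ _ hij heq'⟩
    · exact ⟨(i : ℕ) - (j : ℕ), by omega, hperiod _ _ hij heq'.symm⟩
  classical
  set n := Nat.find hexists with hn
  obtain ⟨hnpos, hnper⟩ : 0 < n ∧ (h ^ n) x₀ = x₀ := Nat.find_spec hexists
  have hn2 : 2 ≤ n := by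
    rcases Nat.lt_or_ge n 2 with hlt | hge
    · exfalso
      have hn1 : n = 1 := by omega
      rw [hn1] at hnper
      exact hx₀ (by simpa using hnper)
    · exact hge
  have hinj : ∀ i < n, ∀ j < n, (h ^ i) x₀ = (h ^ j) x₀ → i = j := by
    intro i hi j hj heq
    by_contra hne
    rcases lt_or_gt_of_ne hne with hij | hij
    · exact Nat.find_min hexists (show j - i < n by omega) ⟨by omega, hperiod _ _ hij heq⟩
    · exact Nat.find_min hexists (show i - j < n by omega) ⟨by omega, hperiod _ _ hij heq.symm⟩
  refine ⟨(List.range n).map fun i => (h ^ i) x₀, ?_, ?_, ?_, ?_, ?_, ?_⟩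
  · refine List.Nodup.map_on ?_ (List.nodup_range)
    intro i hi j hj heq
    exact hinj i (List.mem_range.mp hi) j (List.mem_range.mp hj) heq
  · simpa using hn2
  · intro y hy
    obtain ⟨i, _, rfl⟩ := List.mem_map.mp hy
    exact aux i
  · exact List.mem_map.mpr ⟨0, List.mem_range.mpr (by omega), by simp⟩
  · -- chain maps each orbit point to its image
    intro y hy
    set L := (List.range n).map fun i => (h ^ i) x₀ with hL
    have hndL : L.Nodup := by
      refine List.Nodup.map_on ?_ (List.nodup_range)
      intro i hi j hj heq
      exact hinj i (List.mem_range.mp hi) j (List.mem_range.mp hj) heq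
    have hlen : L.length = n := by simp [hL]
    have hLne : L ≠ [] := by
      intro hc; rw [hc] at hlen; simp at hlen; omega
    have hgetl : ∀ (k : ℕ) (hk : k < n), L[k]'(by omega) = (h ^ k) x₀ := by
      intro k hk
      simp [hL]
    obtain ⟨i, hi, hgi⟩ := List.mem_iff_getElem.mp hy
    have hiv : i < n := by omega
    have hgiy : (h ^ i) x₀ = y := by rw [← hgetl i hiv]; exact hgi
    rw [← hgiy]
    rcases Nat.lt_or_ge (i + 1) n with hi1 | hi1
    · have hchain := chain_getElem L hndL i (by omega)
      rw [hgetl i hiv, hgetl (i + 1) hi1] at hchain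
      rw [hchain, ← Equiv.Perm.mul_apply, ← pow_succ']
    · have hieq : i = n - 1 := by omega
      have hlast : L.getLast hLne = (h ^ i) x₀ := by
        rw [List.getLast_eq_getElem]
        have : L.length - 1 = i := by omega
        simp only [this]
        exact hgetl i hiv
      have hchain := chain_getLast L hndL hLne
      rw [hlast] at hchain
      have hhead : L.head hLne = x₀ := by
        have h0 : L[0]'(by omega) = (h ^ 0) x₀ := hgetl 0 (by omega)
        rw [← List.getElem_zero]
        simpa using h0
      rw [hchain, hhead]
      have e1 : h ((h ^ i) x₀) = (h ^ n) x₀ := by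
        rw [← Equiv.Perm.mul_apply, ← pow_succ']
        congr 2
        omega
      rw [e1, hnper]
  · -- closure of the complement
    intro y hyL hyimg
    apply hyL
    obtain ⟨i, hi, hgi⟩ := List.mem_map.mp hyimg
    have hi' : i < n := List.mem_range.mp hi
    rcases Nat.eq_zero_or_pos i with rfl | hipos
    · have hyx : h y = x₀ := by simpa using hgi.symm
      have e1 : h ((h ^ (n - 1)) x₀) = (h ^ n) x₀ := by
        rw [← Equiv.Perm.mul_apply, ← pow_succ']
        congr 2
        omega
      have hy' : y = (h ^ (n - 1)) x₀ := h.injective (by rw [hyx, e1, hnper])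
      exact List.mem_map.mpr ⟨n - 1, List.mem_range.mpr (by omega), hy'.symm⟩
    · have e1 : h ((h ^ (i - 1)) x₀) = (h ^ i) x₀ := by
        rw [← Equiv.Perm.mul_apply, ← pow_succ']
        congr 2
        omega
      have hy' : y = (h ^ (i - 1)) x₀ := h.injective (by rw [e1, hgi])
      exact List.mem_map.mpr ⟨i - 1, List.mem_range.mpr (by omega), hy'.symm⟩


/-! ### helpers for the master lemma -/

lemma supp_closure {g : Equiv.Perm ℕ} {x : ℕ} (hx : g x ≠ x) : g (g x) ≠ g x :=
  fun e => hx (g.injective e)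

lemma forall₂_fun_map {ρ f : ℕ → ℕ} :
    ∀ {l : List ℕ}, List.Forall₂ (fun a b => ρ a = b) l (l.map f) → ∀ q ∈ l, ρ q = f q := by
  intro l
  induction l with
  | nil => intro _ q hq; simp at hq
  | cons a t ih =>
    intro hf q hq
    rw [List.map_cons] at hf
    rcases hf with _ | ⟨hab, hrest⟩
    rcases List.mem_cons.mp hq with rfl | hq'
    · assumption
    · exact ih (by assumption) q hq'

lemma flat_map_pair (π : ℕ → ℕ) :
    ∀ Tp : List (ℕ × ℕ), flat (Tp.map fun p => (π p.1, π p.2)) = (flat Tp).map π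
  | [] => rfl
  | p :: T => by
      simp only [List.map_cons, flat_cons, List.map_cons]
      rw [flat_map_pair π T]

/-! ### the master lemma -/

lemma master : ∀ (c : ℕ) (h : Equiv.Perm ℕ) (s : Finset ℕ), s.card ≤ c →
    (∀ x, h x ≠ x → x ∈ s) →
    ∃ (sw : List (Equiv.Perm ℕ)) (Tp : List (ℕ × ℕ)) (u v : Equiv.Perm ℕ) (N : ℕ),
      (∀ τ ∈ sw, τ.IsSwap) ∧ sw.prod = h ∧ sw.length ≤ 2 * Tp.length ∧ Even Tp.length ∧
      (∀ x, u x ≠ x → x < N) ∧ (∀ x, v x ≠ x → x < N) ∧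
      (flat Tp).Nodup ∧ (∀ q ∈ flat Tp, q < N) ∧
      (u * h * u⁻¹) * (v * h * v⁻¹) = swapsProd Tp := by
  intro c
  induction c with
  | zero =>
    intro h s hcard hsupp
    have hs : s = ∅ := Finset.card_eq_zero.mp (by omega)
    have h1 : h = 1 := by
      ext x
      by_contra hx
      have := hsupp x hx
      rw [hs] at this
      simp at this
    refine ⟨[], [], 1, 1, 0, by simp, by simp [h1], by simp, by simp, by simp, by simp,
      by simp, by simp, by simp [h1]⟩
  | succ c IH =>
    intro h s hcard hsupp
    by_cases h1 : h = 1
    · refine ⟨[], [], 1, 1, 0, by simp, by simp [h1], by simp, by simp, by simp, by simp,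
        by simp, by simp, by simp [h1]⟩
    -- pick a moved point
    have hx₀ : ∃ x₀, h x₀ ≠ x₀ := by
      by_contra hc
      push_neg at hc
      exact h1 (by ext x; simpa using hc x)
    obtain ⟨x₀, hx₀⟩ := hx₀
    obtain ⟨L, ndL, hlen2, hmoves, hx₀L, hchainL, hclosure⟩ := orbit_decomp h s hsupp x₀ hx₀
    set n := L.length with hn
    set γ := chain L with hγ
    set h' := γ⁻¹ * h with hh'
    have hLs : ∀ y ∈ L, y ∈ s := fun y hy => hsupp y (hmoves y hy)
    -- h' fixes L
    have hf1 : ∀ y ∈ L, h' y = y := by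
      intro y hy
      show γ⁻¹ (h y) = y
      rw [← hchainL y hy]
      exact Equiv.Perm.inv_apply_self _ _
    have hf2 : ∀ y, y ∉ L → h' y = h y := by
      intro y hy
      show γ⁻¹ (h y) = h y
      have : γ (h y) = h y := chain_fix _ (hclosure y hy)
      nth_rewrite 1 [← this]
      exact Equiv.Perm.inv_apply_self _ _
    have hf3 : ∀ y, h' y ≠ y → y ∈ s ∧ y ∉ L := by
      intro y hy
      have hyL : y ∉ L := fun hyl => hy (hf1 y hyl)
      rw [hf2 y hyL] at hy
      exact ⟨hsupp y hy, hyL⟩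
    -- smaller support set
    set s' := s.filter (fun q => q ∉ L) with hs'
    have hsub : s' ⊆ s := Finset.filter_subset _ _
    have hx₀s : x₀ ∈ s := hsupp x₀ hx₀
    have hx₀s' : x₀ ∉ s' := by
      rw [hs']
      simp [hx₀L]
    have hcard' : s'.card ≤ c := by
      have : s'.card < s.card := Finset.card_lt_card ⟨hsub, fun hss => hx₀s' (hss hx₀s)⟩
      omega
    have hsupp' : ∀ x, h' x ≠ x → x ∈ s' := by
      intro x hx
      obtain ⟨h1', h2'⟩ := hf3 x hx
      rw [hs']
      simp [h1', h2']
    obtain ⟨sw', Tp', u', v', N', hsw'swap, hsw'prod, hsw'len, hTp'even, hu'bnd, hv'bnd,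
      hTp'nd, hTp'bnd, hmain'⟩ := IH h' s' hcard' hsupp'
    -- the gadget for an n-cycle
    obtain ⟨La, Lb, Tpg, K, gla, glb, gnda, gndb, gbna, gbnb, gbnt, gndt, ghev, ghcnt, gheq⟩ :=
      gadget_all n hlen2
    -- fresh offset
    set SB := s.sup id + 1 with hSB
    have hsSB : ∀ x ∈ s, x < SB := by
      intro x hx
      have := Finset.le_sup (f := id) hx
      simp at this
      omega
    set F := max (max N' SB) K with hF
    -- the shifting permutation π
    have hrangend : (List.range K).Nodup := List.nodup_range
    have hrangemapnd : ((List.range K).map (· + F)).Nodup :=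
      List.Nodup.map (fun a b hab => by omega) hrangend
    obtain ⟨π, πsupp, πf⟩ := buildMap (List.range K) ((List.range K).map (· + F))
      hrangend hrangemapnd
      (by
        intro x hxr hxm
        obtain ⟨q, hq, hq'⟩ := List.mem_map.mp hxm
        have h1 : x < K := List.mem_range.mp hxr
        have h2 : K ≤ F := le_max_right _ _
        omega)
      (by simp)
    have hπval : ∀ q, q < K → π q = q + F := by
      intro q hq
      exact forall₂_fun_map πf q (List.mem_range.mpr hq)
    -- shifted gadget
    set La' := La.map π with hLa'
    set Lb' := Lb.map π with hLb'
    set Tpg' := Tpg.map (fun p => (π p.1, π p.2)) with hTpg'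
    have hLa'val : ∀ q ∈ La', F ≤ q ∧ q < F + K := by
      intro q hq
      obtain ⟨a, ha, rfl⟩ := List.mem_map.mp hq
      have h1 := gbna a ha
      rw [hπval a h1]
      omega
    have hLb'val : ∀ q ∈ Lb', F ≤ q ∧ q < F + K := by
      intro q hq
      obtain ⟨a, ha, rfl⟩ := List.mem_map.mp hq
      have h1 := gbnb a ha
      rw [hπval a h1]
      omega
    have hTpg'flat : flat Tpg' = (flat Tpg).map π := flat_map_pair π Tpg
    have hTpg'val : ∀ q ∈ flat Tpg', F ≤ q ∧ q < F + K := by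
      intro q hq
      rw [hTpg'flat] at hq
      obtain ⟨a, ha, rfl⟩ := List.mem_map.mp hq
      have h1 := gbnt a ha
      rw [hπval a h1]
      omega
    have hgadget' : chain La' * chain Lb' = swapsProd Tpg' := by
      rw [hLa', hLb', hTpg', ← chain_conj, ← chain_conj, ← swapsProd_conj, ← gheq]
      group
    -- conjugators sending the orbit onto the gadget cycles
    have hsrcu : ∀ q ∈ L.map u', q < F := by
      intro q hq
      obtain ⟨y, hy, rfl⟩ := List.mem_map.mp hq
      by_cases hmove : u' y = y
      · rw [hmove]
        have := hsSB y (hLs y hy)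
        have h2 : SB ≤ F := le_trans (le_max_right N' SB) (le_max_left _ _)
        omega
      · have h3 : u' (u' y) ≠ u' y := supp_closure hmove
        have := hu'bnd _ h3
        have h2 : N' ≤ F := le_trans (le_max_left N' SB) (le_max_left _ _)
        omega
    have hsrcv : ∀ q ∈ L.map v', q < F := by
      intro q hq
      obtain ⟨y, hy, rfl⟩ := List.mem_map.mp hq
      by_cases hmove : v' y = y
      · rw [hmove]
        have := hsSB y (hLs y hy)
        have h2 : SB ≤ F := le_trans (le_max_right N' SB) (le_max_left _ _)
        omega
      · have h3 : v' (v' y) ≠ v' y := supp_closure hmove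
        have := hv'bnd _ h3
        have h2 : N' ≤ F := le_trans (le_max_left N' SB) (le_max_left _ _)
        omega
    obtain ⟨ρa, ρasupp, ρaf⟩ := buildMap (L.map u') La'
      (List.Nodup.map u'.injective ndL) (List.Nodup.map π.injective gnda)
      (fun x hx hx' => absurd (hLa'val x hx').1 (by have := hsrcu x hx; omega))
      (by simp [hLa', gla, hn])
    obtain ⟨ρb, ρbsupp, ρbf⟩ := buildMap (L.map v') Lb'
      (List.Nodup.map v'.injective ndL) (List.Nodup.map π.injective gndb)
      (fun x hx hx' => absurd (hLb'val x hx').1 (by have := hsrcv x hx; omega))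
      (by simp [hLb', glb, hn])
    set u := ρa * u' with hu
    set v := ρb * v' with hv
    set H1 := u' * h' * u'⁻¹ with hH1
    set H2 := v' * h' * v'⁻¹ with hH2
    -- support bounds for the conjugated rests
    have hH1bnd : ∀ x, H1 x ≠ x → x < F := by
      intro x hx
      have hw : h' (u'⁻¹ x) ≠ u'⁻¹ x := by
        intro he
        apply hx
        show u' (h' (u'⁻¹ x)) = x
        rw [he, Equiv.Perm.apply_inv_self]
      obtain ⟨hws, hwL⟩ := hf3 _ hw
      set w := u'⁻¹ x with hwdef
      have hxw : x = u' w := by rw [hwdef, Equiv.Perm.apply_inv_self]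
      by_cases hmove : u' w = w
      · rw [hxw, hmove]
        have := hsSB w hws
        have h2 : SB ≤ F := le_trans (le_max_right N' SB) (le_max_left _ _)
        omega
      · have h3 : u' (u' w) ≠ u' w := supp_closure hmove
        have := hu'bnd _ h3
        have h2 : N' ≤ F := le_trans (le_max_left N' SB) (le_max_left _ _)
        rw [hxw]
        omega
    have hH2bnd : ∀ x, H2 x ≠ x → x < F := by
      intro x hx
      have hw : h' (v'⁻¹ x) ≠ v'⁻¹ x := by
        intro he
        apply hx
        show v' (h' (v'⁻¹ x)) = x
        rw [he, Equiv.Perm.apply_inv_self]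
      obtain ⟨hws, hwL⟩ := hf3 _ hw
      set w := v'⁻¹ x with hwdef
      have hxw : x = v' w := by rw [hwdef, Equiv.Perm.apply_inv_self]
      by_cases hmove : v' w = w
      · rw [hxw, hmove]
        have := hsSB w hws
        have h2 : SB ≤ F := le_trans (le_max_right N' SB) (le_max_left _ _)
        omega
      · have h3 : v' (v' w) ≠ v' w := supp_closure hmove
        have := hv'bnd _ h3
        have h2 : N' ≤ F := le_trans (le_max_left N' SB) (le_max_left _ _)
        rw [hxw]
        omega
    -- ρa fixes the support of H1
    have hρafix : ∀ x, H1 x ≠ x → ρa x = x := by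
      intro x hx
      by_contra hne
      rcases ρasupp x hne with hsrc | htgt
      · -- x = u' y with y ∈ L, but then H1 fixes x
        obtain ⟨y, hy, rfl⟩ := List.mem_map.mp hsrc
        apply hx
        show u' (h' (u'⁻¹ (u' y))) = u' y
        rw [Equiv.Perm.inv_apply_self, hf1 y hy]
      · exact absurd (hLa'val x htgt).1 (by have := hH1bnd x hx; omega)
    have hρbfix : ∀ x, H2 x ≠ x → ρb x = x := by
      intro x hx
      by_contra hne
      rcases ρbsupp x hne with hsrc | htgt
      · obtain ⟨y, hy, rfl⟩ := List.mem_map.mp hsrc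
        apply hx
        show v' (h' (v'⁻¹ (v' y))) = v' y
        rw [Equiv.Perm.inv_apply_self, hf1 y hy]
      · exact absurd (hLb'val x htgt).1 (by have := hH2bnd x hx; omega)
    -- the two conjugates
    have hdecomp : h = γ * h' := by rw [hh']; group
    have hmain1 : u * h * u⁻¹ = chain La' * H1 := by
      have e1 : u' * h * u'⁻¹ = chain (L.map u') * H1 := by
        rw [hdecomp, hH1]
        have : u' * (γ * h') * u'⁻¹ = (u' * γ * u'⁻¹) * (u' * h' * u'⁻¹) := by group
        rw [this, hγ, chain_conj]
      have e2 : u * h * u⁻¹ = ρa * (u' * h * u'⁻¹) * ρa⁻¹ := by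
        rw [hu]; group
      rw [e2, e1]
      have : ρa * (chain (L.map u') * H1) * ρa⁻¹
          = (ρa * chain (L.map u') * ρa⁻¹) * (ρa * H1 * ρa⁻¹) := by group
      rw [this, chain_conj, conj_fix hρafix, forall₂_eq_map ρaf]
    have hmain2 : v * h * v⁻¹ = chain Lb' * H2 := by
      have e1 : v' * h * v'⁻¹ = chain (L.map v') * H2 := by
        rw [hdecomp, hH2]
        have : v' * (γ * h') * v'⁻¹ = (v' * γ * v'⁻¹) * (v' * h' * v'⁻¹) := by group
        rw [this, hγ, chain_conj]
      have e2 : v * h * v⁻¹ = ρb * (v' * h * v'⁻¹) * ρb⁻¹ := by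
        rw [hv]; group
      rw [e2, e1]
      have : ρb * (chain (L.map v') * H2) * ρb⁻¹
          = (ρb * chain (L.map v') * ρb⁻¹) * (ρb * H2 * ρb⁻¹) := by group
      rw [this, chain_conj, conj_fix hρbfix, forall₂_eq_map ρbf]
    -- commute H1 with chain Lb'
    have hcomm : H1 * chain Lb' = chain Lb' * H1 := by
      apply commute_of_disjoint
      intro x
      rcases lt_or_ge x F with hxF | hxF
      · right
        apply chain_fix
        intro hmem
        exact absurd (hLb'val x hmem).1 (by omega)
      · left
        by_contra hne
        exact absurd (hH1bnd x hne) (by omega)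
    -- H1 * H2 is the rest
    have hrest : H1 * H2 = swapsProd Tp' := hmain'
    -- final product equation
    have hfinal : (u * h * u⁻¹) * (v * h * v⁻¹) = swapsProd (Tpg' ++ Tp') := by
      rw [hmain1, hmain2]
      calc (chain La' * H1) * (chain Lb' * H2)
          = chain La' * ((H1 * chain Lb') * H2) := by group
        _ = chain La' * ((chain Lb' * H1) * H2) := by rw [hcomm]
        _ = (chain La' * chain Lb') * (H1 * H2) := by group
        _ = swapsProd Tpg' * swapsProd Tp' := by rw [hgadget', hrest]
        _ = swapsProd (Tpg' ++ Tp') := (swapsProd_append _ _).symm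
    refine ⟨chainSwaps L ++ sw', Tpg' ++ Tp', u, v, F + K, ?_, ?_, ?_, ?_, ?_, ?_, ?_, ?_,
      hfinal⟩
    · intro τ hτ
      rcases List.mem_append.mp hτ with hτ | hτ
      · exact chainSwaps_isSwap L ndL τ hτ
      · exact hsw'swap τ hτ
    · rw [List.prod_append, chainSwaps_prod, hsw'prod, ← hγ, ← hdecomp]
    · rw [List.length_append, List.length_append, chainSwaps_length]
      have h1 : Tpg'.length = Tpg.length := by simp [hTpg']
      omega
    · rw [List.length_append]
      apply Even.add ?_ hTp'even
      simpa [hTpg'] using ghev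
    · -- bound for u
      intro x hx
      rw [hu] at hx
      by_cases hmove : u' x = x
      · have hρ : ρa x ≠ x := by
          intro he
          apply hx
          show ρa (u' x) = x
          rw [hmove, he]
        rcases ρasupp x hρ with hsrc | htgt
        · have := hsrcu x hsrc; omega
        · have := (hLa'val x htgt).2; omega
      · have h3 : u' (u' x) ≠ u' x := supp_closure hmove
        have := hu'bnd _ h3
        have h2 : N' ≤ F := le_trans (le_max_left N' SB) (le_max_left _ _)
        have := hu'bnd _ hmove
        omega
    · -- bound for v
      intro x hx
      rw [hv] at hx
      by_cases hmove : v' x = x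
      · have hρ : ρb x ≠ x := by
          intro he
          apply hx
          show ρb (v' x) = x
          rw [hmove, he]
        rcases ρbsupp x hρ with hsrc | htgt
        · have := hsrcv x hsrc; omega
        · have := (hLb'val x htgt).2; omega
      · have h3 : v' (v' x) ≠ v' x := supp_closure hmove
        have := hv'bnd _ h3
        have h2 : N' ≤ F := le_trans (le_max_left N' SB) (le_max_left _ _)
        have := hv'bnd _ hmove
        omega
    · -- Nodup of flat
      rw [flat_append, List.nodup_append']
      refine ⟨?_, hTp'nd, ?_⟩
      · rw [hTpg'flat]
        exact List.Nodup.map π.injective gndt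
      · intro q hq hq'
        have h1 := (hTpg'val q hq).1
        have h2 := hTp'bnd q hq'
        have h3 : N' ≤ F := le_trans (le_max_left N' SB) (le_max_left _ _)
        omega
    · -- bound of flat
      intro q hq
      rw [flat_append] at hq
      rcases List.mem_append.mp hq with hq | hq
      · exact (hTpg'val q hq).2
      · have := hTp'bnd q hq
        have h3 : N' ≤ F := le_trans (le_max_left N' SB) (le_max_left _ _)
        omega


/-! ### repositioning helpers -/

lemma flat_length : ∀ Tp : List (ℕ × ℕ), (flat Tp).length = 2 * Tp.length
  | [] => rfl
  | p :: T => by simp [flat_cons, flat_length T]; omega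

lemma flat_ranges (k : ℕ) :
    flat ((List.range k).map fun i => (2 * i + 1, 2 * i + 2))
      = (List.range (2 * k)).map (· + 1) := by
  induction k with
  | zero => rfl
  | succ k ih =>
    rw [List.range_succ, List.map_append, flat_append, ih]
    rw [show 2 * (k + 1) = (2 * k) + 1 + 1 by omega, List.range_succ, List.range_succ]
    simp [flat]

lemma forall₂_comp {ρ σ : ℕ → ℕ} :
    ∀ {X Y Z : List ℕ}, List.Forall₂ (fun a b => ρ a = b) X Y →
      List.Forall₂ (fun a b => σ a = b) Y Z →
      List.Forall₂ (fun a b => σ (ρ a) = b) X Z := by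
  intro X Y Z h1
  induction h1 generalizing Z with
  | nil => intro h2; cases h2; exact List.Forall₂.nil
  | cons hab h ih =>
    intro h2
    cases h2 with
    | cons hbc h2' => exact List.Forall₂.cons (by rw [hab, hbc]) (ih h2')

lemma pairify {R : ℕ → ℕ → Prop} :
    ∀ (Tp Pt : List (ℕ × ℕ)), List.Forall₂ R (flat Tp) (flat Pt) →
      List.Forall₂ (fun p q => R p.1 q.1 ∧ R p.2 q.2) Tp Pt
  | [], [], _ => List.Forall₂.nil
  | [], q :: Pt, hf => by simp [flat] at hf
  | p :: Tp, [], hf => by simp [flat] at hf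
  | p :: Tp, q :: Pt, hf => by
      rw [flat_cons, flat_cons] at hf
      rcases hf with _ | ⟨h1, hf'⟩
      rcases hf' with _ | ⟨h2, hf''⟩
      exact List.Forall₂.cons ⟨h1, h2⟩ (pairify Tp Pt hf'')

lemma forall₂_pair_eq_map {ρ : ℕ → ℕ} :
    ∀ {Tp Pt : List (ℕ × ℕ)},
      List.Forall₂ (fun p q => ρ p.1 = q.1 ∧ ρ p.2 = q.2) Tp Pt →
      Tp.map (fun p => (ρ p.1, ρ p.2)) = Pt := by
  intro Tp Pt h
  induction h with
  | nil => rfl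
  | cons hab _ ih =>
    simp only [List.map_cons, ih]
    congr 1
    exact Prod.ext hab.1 hab.2


end Stmt9

namespace Stmt9

lemma finSupp_of_bnd {g : Equiv.Perm ℕ} {N : ℕ} (h : ∀ x, g x ≠ x → x < N) :
    FinSupp g :=
  Set.Finite.subset (Set.finite_Iio N) (fun x hx => h x hx)

lemma finSupp_mul {f g : Equiv.Perm ℕ} (hf : FinSupp f) (hg : FinSupp g) :
    FinSupp (f * g) := by
  apply Set.Finite.subset (hf.union hg)
  intro x hx
  simp only [Set.mem_setOf_eq, Equiv.Perm.mul_apply] at hx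
  by_cases h1 : g x = x
  · left
    rw [h1] at hx
    exact hx
  · right
    exact h1

lemma finSupp_of_lists {g : Equiv.Perm ℕ} {src tgt : List ℕ}
    (h : ∀ x, g x ≠ x → x ∈ src ∨ x ∈ tgt) : FinSupp g := by
  apply Set.Finite.subset ((src.finite_toSet).union (tgt.finite_toSet))
  intro x hx
  rcases h x hx with h | h
  · exact Or.inl h
  · exact Or.inr h

end Stmt9



end Stmt9Aux

/-- for any nontrivial `h ∈ S_∞` there is `ℓ ≥ λ(h)/4` such that `ι_{2ℓ}`
is a product of two `S_∞`-conjugates of `h`. -/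
theorem stmt9 (h : Equiv.Perm ℕ) (hfs : FinSupp h) (h1 : h ≠ 1) :
    ∃ ℓ : ℕ, wl h ≤ 4 * ℓ ∧
      ∃ a b : Equiv.Perm ℕ, ConjS h a ∧ ConjS h b ∧ a * b = iota (2 * ℓ) := by
  classical
  set s := hfs.toFinset with hs
  have hsupp : ∀ x, h x ≠ x → x ∈ s := by
    intro x hx
    rw [hs]
    exact (Set.Finite.mem_toFinset (hs := hfs)).mpr hx
  obtain ⟨sw, Tp, u, v, N, hswswap, hswprod, hswlen, hTpeven, hubnd, hvbnd, hTpnd, hTpbnd,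
    hmain⟩ := Stmt9.master s.card h s le_rfl hsupp
  obtain ⟨ℓ, hℓ⟩ := hTpeven
  have hTplen : Tp.length = 2 * ℓ := by omega
  refine ⟨ℓ, ?_, ?_⟩
  · -- wl h ≤ 4ℓ
    have hwl : wl h ≤ sw.length := Nat.sInf_le ⟨sw, rfl, hswswap, hswprod⟩
    omega
  -- reposition the transpositions to the iota positions
  set k := 2 * ℓ with hk
  set Pt := (List.range k).map (fun i => (2 * i + 1, 2 * i + 2)) with hPt
  have hiota : Stmt9.swapsProd Pt = iota k := by
    rw [hPt, iota, Stmt9.swapsProd, List.map_map]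
    rfl
  have hflatPt : Stmt9.flat Pt = (List.range (2 * k)).map (· + 1) := Stmt9.flat_ranges k
  have hflatlen : (Stmt9.flat Tp).length = 2 * k := by
    rw [Stmt9.flat_length, hTplen]
  set Z := max N (2 * k + 1) with hZ
  set zone := (List.range (2 * k)).map (· + Z) with hzone
  have hzonend : zone.Nodup :=
    List.Nodup.map (fun a b hab => by omega) List.nodup_range
  obtain ⟨ρ1, ρ1supp, ρ1f⟩ := Stmt9.buildMap (Stmt9.flat Tp) zone hTpnd hzonend
    (by
      intro x hx hx'
      obtain ⟨q, hq, rfl⟩ := List.mem_map.mp hx'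
      have h1 := hTpbnd _ hx
      have h2 : N ≤ Z := le_max_left _ _
      omega)
    (by rw [hflatlen, hzone]; simp)
  obtain ⟨ρ2, ρ2supp, ρ2f⟩ := Stmt9.buildMap zone ((List.range (2 * k)).map (· + 1))
    hzonend (List.Nodup.map (fun a b hab => by omega) List.nodup_range)
    (by
      intro x hx hx'
      obtain ⟨q, hq, rfl⟩ := List.mem_map.mp hx
      obtain ⟨q', hq', he⟩ := List.mem_map.mp hx'
      have h2 : 2 * k + 1 ≤ Z := le_max_right _ _
      have h3 : q' < 2 * k := List.mem_range.mp hq'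
      omega)
    (by rw [hzone]; simp)
  set ρ := ρ2 * ρ1 with hρ
  have hρf : List.Forall₂ (fun a b => ρ a = b) (Stmt9.flat Tp) (Stmt9.flat Pt) := by
    rw [hflatPt]
    have := Stmt9.forall₂_comp (ρ := ⇑ρ1) (σ := ⇑ρ2) ρ1f ρ2f
    refine this.imp ?_
    intro a b hab
    rw [hρ, Equiv.Perm.mul_apply, hab]
  have hpair := Stmt9.pairify Tp Pt hρf
  have hmap : Tp.map (fun p => (ρ p.1, ρ p.2)) = Pt := Stmt9.forall₂_pair_eq_map hpair
  -- the final conjugates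
  have hρfin : FinSupp ρ :=
    Stmt9.finSupp_mul (Stmt9.finSupp_of_lists ρ2supp) (Stmt9.finSupp_of_lists ρ1supp)
  have hufin : FinSupp (ρ * u) :=
    Stmt9.finSupp_mul hρfin (Stmt9.finSupp_of_bnd hubnd)
  have hvfin : FinSupp (ρ * v) :=
    Stmt9.finSupp_mul hρfin (Stmt9.finSupp_of_bnd hvbnd)
  refine ⟨(ρ * u) * h * (ρ * u)⁻¹, (ρ * v) * h * (ρ * v)⁻¹,
    ⟨ρ * u, hufin, rfl⟩, ⟨ρ * v, hvfin, rfl⟩, ?_⟩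
  have e1 : ((ρ * u) * h * (ρ * u)⁻¹) * ((ρ * v) * h * (ρ * v)⁻¹)
      = ρ * ((u * h * u⁻¹) * (v * h * v⁻¹)) * ρ⁻¹ := by group
  rw [e1, hmain, Stmt9.swapsProd_conj, hmap, hiota]
end

section
/- For any even finitely supported permutation g of ℕ and any natural number k ≥ λ(g)/2, g can be written as a product of two permutations each conjugate to ι_k in S_∞. -/
section AuxStmt11
open List Equiv

def pts (l : List (ℕ × ℕ)) : List ℕ := l.flatMap (fun p => [p.1, p.2])

def PP (l : List (ℕ × ℕ)) : Equiv.Perm ℕ := (l.map (fun p => Equiv.swap p.1 p.2)).prod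

def Ok (l : List (ℕ × ℕ)) : Prop := (pts l).Nodup

@[simp] lemma pts_nil : pts [] = [] := rfl

@[simp] lemma pts_cons (p : ℕ × ℕ) (l : List (ℕ × ℕ)) :
    pts (p :: l) = p.1 :: p.2 :: pts l := rfl

@[simp] lemma pts_append (a b : List (ℕ × ℕ)) : pts (a ++ b) = pts a ++ pts b := by
  simp [pts]

lemma pts_length (l : List (ℕ × ℕ)) : (pts l).length = 2 * l.length := by
  induction l with
  | nil => rfl
  | cons p l ih => simp [ih]; ring

@[simp] lemma PP_nil : PP [] = 1 := rfl

@[simp] lemma PP_cons (p : ℕ × ℕ) (l : List (ℕ × ℕ)) :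
    PP (p :: l) = Equiv.swap p.1 p.2 * PP l := by
  simp [PP]

lemma PP_append (a b : List (ℕ × ℕ)) : PP (a ++ b) = PP a * PP b := by
  simp [PP]

lemma mem_pts {z : ℕ} {l : List (ℕ × ℕ)} :
    z ∈ pts l ↔ ∃ p ∈ l, z = p.1 ∨ z = p.2 := by
  simp [pts, List.mem_flatMap, eq_comm]

lemma fst_mem_pts {p : ℕ × ℕ} {l : List (ℕ × ℕ)} (h : p ∈ l) : p.1 ∈ pts l :=
  mem_pts.2 ⟨p, h, Or.inl rfl⟩

lemma snd_mem_pts {p : ℕ × ℕ} {l : List (ℕ × ℕ)} (h : p ∈ l) : p.2 ∈ pts l :=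
  mem_pts.2 ⟨p, h, Or.inr rfl⟩

lemma PP_fix {z : ℕ} {l : List (ℕ × ℕ)} (h : z ∉ pts l) : PP l z = z := by
  induction l with
  | nil => rfl
  | cons p l ih =>
    simp only [pts_cons, List.mem_cons, not_or] at h
    simp only [PP_cons, Equiv.Perm.mul_apply, ih h.2.2,
      Equiv.swap_apply_of_ne_of_ne h.1 h.2.1]

lemma mem_pts_of_moved {z : ℕ} {l : List (ℕ × ℕ)} (h : PP l z ≠ z) : z ∈ pts l := by
  by_contra hz; exact h (PP_fix hz)

lemma FinSupp_PP (l : List (ℕ × ℕ)) : FinSupp (PP l) :=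
  Set.Finite.subset (pts l).finite_toSet (fun _ h => mem_pts_of_moved h)

lemma FinSupp_mul {f g : Equiv.Perm ℕ} (hf : FinSupp f) (hg : FinSupp g) :
    FinSupp (f * g) := by
  refine Set.Finite.subset (hf.union hg) ?_
  intro z hz
  by_contra hc
  simp only [Set.mem_union, Set.mem_setOf_eq, not_or, not_not] at hc
  exact hz (by simp [Equiv.Perm.mul_apply, hc.1, hc.2])

lemma Ok_cons_iff {p : ℕ × ℕ} {l : List (ℕ × ℕ)} :
    Ok (p :: l) ↔ p.1 ≠ p.2 ∧ p.1 ∉ pts l ∧ p.2 ∉ pts l ∧ Ok l := by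
  simp only [Ok, pts_cons, List.nodup_cons, List.mem_cons]
  tauto

lemma Ok.tail {p : ℕ × ℕ} {l : List (ℕ × ℕ)} (h : Ok (p :: l)) : Ok l := by
  simp only [Ok, pts_cons, List.nodup_cons] at h ⊢
  exact h.2.2

lemma PP_fst : ∀ {l : List (ℕ × ℕ)}, Ok l → ∀ {p : ℕ × ℕ}, p ∈ l → PP l p.1 = p.2 := by
  intro l
  induction l with
  | nil => intro _ p hp; simp at hp
  | cons q l ih =>
    intro hok p hp
    obtain ⟨hne, h1, h2, hok'⟩ := Ok_cons_iff.1 hok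
    rcases List.mem_cons.1 hp with rfl | hp
    · simp [PP_cons, Equiv.Perm.mul_apply, PP_fix h1]
    · have hm2 : p.2 ∈ pts l := snd_mem_pts hp
      simp only [PP_cons, Equiv.Perm.mul_apply, ih hok' hp]
      exact Equiv.swap_apply_of_ne_of_ne (fun e => h1 (e ▸ hm2)) (fun e => h2 (e ▸ hm2))

lemma PP_snd : ∀ {l : List (ℕ × ℕ)}, Ok l → ∀ {p : ℕ × ℕ}, p ∈ l → PP l p.2 = p.1 := by
  intro l
  induction l with
  | nil => intro _ p hp; simp at hp
  | cons q l ih =>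
    intro hok p hp
    obtain ⟨hne, h1, h2, hok'⟩ := Ok_cons_iff.1 hok
    rcases List.mem_cons.1 hp with rfl | hp
    · simp [PP_cons, Equiv.Perm.mul_apply, PP_fix h2]
    · have hm1 : p.1 ∈ pts l := fst_mem_pts hp
      simp only [PP_cons, Equiv.Perm.mul_apply, ih hok' hp]
      exact Equiv.swap_apply_of_ne_of_ne (fun e => h1 (e ▸ hm1)) (fun e => h2 (e ▸ hm1))

lemma pts_closed {l : List (ℕ × ℕ)} (hok : Ok l) {z : ℕ} (hz : z ∈ pts l) :
    PP l z ∈ pts l := by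
  rcases mem_pts.1 hz with ⟨p, hp, rfl | rfl⟩
  · rw [PP_fst hok hp]; exact snd_mem_pts hp
  · rw [PP_snd hok hp]; exact fst_mem_pts hp

lemma PP_sq {l : List (ℕ × ℕ)} (hok : Ok l) : PP l * PP l = 1 := by
  ext z
  rcases Classical.em (z ∈ pts l) with hz | hz
  · rcases mem_pts.1 hz with ⟨p, hp, rfl | rfl⟩
    · simp [Equiv.Perm.mul_apply, PP_fst hok hp, PP_snd hok hp]
    · simp [Equiv.Perm.mul_apply, PP_fst hok hp, PP_snd hok hp]
  · simp [Equiv.Perm.mul_apply, PP_fix hz]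

lemma PP_inv {l : List (ℕ × ℕ)} (hok : Ok l) : (PP l)⁻¹ = PP l :=
  inv_eq_of_mul_eq_one_right (PP_sq hok)

lemma PP_disjoint {a b : List (ℕ × ℕ)} (h : ∀ z ∈ pts a, z ∉ pts b) :
    Equiv.Perm.Disjoint (PP a) (PP b) := by
  intro z
  rcases Classical.em (z ∈ pts a) with hz | hz
  · exact Or.inr (PP_fix (h z hz))
  · exact Or.inl (PP_fix hz)

lemma PP_comm {a b : List (ℕ × ℕ)} (h : ∀ z ∈ pts a, z ∉ pts b) :
    PP a * PP b = PP b * PP a :=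
  (PP_disjoint h).commute

def conjP (f : Equiv.Perm ℕ) (l : List (ℕ × ℕ)) : List (ℕ × ℕ) :=
  l.map (fun p => (f p.1, f p.2))

lemma pts_conjP (f : Equiv.Perm ℕ) (l : List (ℕ × ℕ)) :
    pts (conjP f l) = (pts l).map f := by
  induction l with
  | nil => rfl
  | cons p l ih =>
    rw [show conjP f (p :: l) = (f p.1, f p.2) :: conjP f l from rfl, pts_cons, ih,
      pts_cons, List.map_cons, List.map_cons]

lemma Ok_conjP (f : Equiv.Perm ℕ) {l : List (ℕ × ℕ)} (h : Ok l) : Ok (conjP f l) := by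
  rw [Ok, pts_conjP]
  exact h.map f.injective

lemma conjP_length (f : Equiv.Perm ℕ) (l : List (ℕ × ℕ)) :
    (conjP f l).length = l.length := by simp [conjP]

lemma PP_conjP (f : Equiv.Perm ℕ) (l : List (ℕ × ℕ)) :
    PP (conjP f l) = f * PP l * f⁻¹ := by
  induction l with
  | nil => simp [conjP]
  | cons p l ih =>
    simp only [conjP, List.map_cons, PP_cons] at ih ⊢
    rw [ih, Equiv.swap_apply_apply]
    group

/- ---------------- Section 2 : conjugacy to iota ---------------- -/

def stdPairs (M k : ℕ) : List (ℕ × ℕ) := (List.range k).map (fun i => (M+2*i, M+2*i+1))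

@[simp] lemma stdPairs_length (M k : ℕ) : (stdPairs M k).length = k := by simp [stdPairs]

lemma pts_stdPairs (M k : ℕ) : pts (stdPairs M k) = List.range' M (2*k) := by
  induction k with
  | zero => rfl
  | succ k ih =>
    rw [stdPairs, List.range_succ, List.map_append, ← stdPairs, pts_append]
    have h2 : 2 * (k+1) = (2*k) + 1 + 1 := by ring
    rw [h2, List.range'_concat, List.range'_concat, ih]
    simp [pts]
    omega

lemma Ok_stdPairs (M k : ℕ) : Ok (stdPairs M k) := by
  rw [Ok, pts_stdPairs]; exact List.nodup_range'

lemma iota_eq (k : ℕ) : _root_.iota k = PP (stdPairs 1 k) := by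
  rw [_root_.iota, PP, stdPairs, List.map_map]
  congr 1
  apply List.map_congr_left
  intro i _
  show Equiv.swap (2*i+1) (2*i+2) = Equiv.swap (1+2*i) (1+2*i+1)
  congr 1 <;> ring

lemma pts_zip_subset : ∀ {A B : List ℕ} {z : ℕ}, z ∈ pts (A.zip B) → z ∈ A ∨ z ∈ B := by
  intro A
  induction A with
  | nil => intro B z h; simp [List.zip, pts] at h
  | cons x A ih =>
    intro B z h
    cases B with
    | nil => simp [List.zip, pts] at h
    | cons y B =>
      rw [List.zip_cons_cons, pts_cons] at h
      simp only [List.mem_cons] at h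
      rcases h with h | h | h
      rotate_left
      rotate_left
      case _ =>
        rcases ih (by simpa using h) with h | h
        · exact Or.inl (List.mem_cons_of_mem _ h)
        · exact Or.inr (List.mem_cons_of_mem _ h)
      · exact Or.inl (by simp [h])
      · exact Or.inr (by simp [h])

lemma Ok_zip : ∀ {A B : List ℕ}, (A ++ B).Nodup → A.length = B.length → Ok (A.zip B) := by
  intro A
  induction A with
  | nil => intro B _ _; simp [Ok, List.zip]
  | cons x A ih =>
    intro B hnd hlen
    cases B with
    | nil => simp at hlen
    | cons y B =>
      have hx : x ∉ A ++ y :: B := (List.nodup_cons.1 hnd).1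
      have hnd' : (A ++ y :: B).Nodup := (List.nodup_cons.1 hnd).2
      obtain ⟨hA, hyB, hdisj⟩ := List.nodup_append.1 hnd'
      have hy : y ∉ A ++ B := by
        intro hy
        rcases List.mem_append.1 hy with h | h
        · exact hdisj y h y (by simp) rfl
        · exact (List.nodup_cons.1 hyB).1 h
      have hnd'' : (A ++ B).Nodup := List.nodup_append.2 ⟨hA, (List.nodup_cons.1 hyB).2,
          fun a ha b hb => hdisj a ha b (by simp [hb])⟩
      rw [List.zip_cons_cons, Ok, pts_cons, List.nodup_cons, List.nodup_cons]
      refine ⟨?_, ?_, ih hnd'' (by simpa using hlen)⟩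
      · simp only [List.mem_cons]
        rintro (h | h)
        · exact (List.nodup_cons.1 hnd).1 (h ▸ (List.mem_append_right _ (by simp)))
        · rcases pts_zip_subset h with h' | h'
          · exact hx (List.mem_append_left _ h')
          · exact hx (List.mem_append_right _ (List.mem_cons_of_mem _ h'))
      · intro h
        rcases pts_zip_subset h with h' | h'
        · exact hy (List.mem_append_left _ h')
        · exact hy (List.mem_append_right _ h')

lemma forall₂_zip_eval {A B : List ℕ} (hnd : (A ++ B).Nodup) (hlen : A.length = B.length) :
    List.Forall₂ (fun x y => PP (A.zip B) x = y) A B := by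
  rw [List.forall₂_iff_zip]
  refine ⟨hlen, ?_⟩
  intro a b hab
  exact PP_fst (Ok_zip hnd hlen) (p := (a, b)) hab

lemma forall₂_comp {f g : Equiv.Perm ℕ} :
    ∀ {A B C : List ℕ}, List.Forall₂ (fun x y => f x = y) A B →
      List.Forall₂ (fun x y => g x = y) B C →
      List.Forall₂ (fun x y => g (f x) = y) A C := by
  intro A B C h1
  induction h1 generalizing C with
  | nil => intro h2; cases h2; exact List.Forall₂.nil
  | @cons a b A B hab h ih =>
    intro h2
    cases h2 with
    | cons hbc h2' => exact List.Forall₂.cons (by rw [hab, hbc]) (ih h2')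

lemma forall₂_pts_pairs :
    ∀ {a b : List (ℕ × ℕ)} {R : ℕ → ℕ → Prop}, List.Forall₂ R (pts a) (pts b) →
      a.length = b.length → List.Forall₂ (fun p q => R p.1 q.1 ∧ R p.2 q.2) a b := by
  intro a
  induction a with
  | nil =>
    intro b R h hlen
    cases b with
    | nil => exact List.Forall₂.nil
    | cons q b => simp at hlen
  | cons p a ih =>
    intro b R h hlen
    cases b with
    | nil => simp at hlen
    | cons q b =>
      rw [pts_cons, pts_cons] at h
      cases h with
      | cons h1 h' => cases h' with
        | cons h2 h'' =>
          exact List.Forall₂.cons ⟨h1, h2⟩ (ih h'' (by simpa using hlen))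

lemma conjP_eq_of_forall₂ {c : Equiv.Perm ℕ} :
    ∀ {l₁ l₂ : List (ℕ × ℕ)},
      List.Forall₂ (fun p q : ℕ × ℕ => c p.1 = q.1 ∧ c p.2 = q.2) l₁ l₂ →
      conjP c l₁ = l₂ := by
  intro l₁ l₂ h
  induction h with
  | nil => rfl
  | cons hpq h ih =>
    rw [show conjP c (_ :: _) = _ :: conjP c _ from rfl, ih]
    congr 1
    exact Prod.ext hpq.1 hpq.2

lemma max_bound (L : List ℕ) : ∀ z ∈ L, z ≤ L.foldr max 0 := by
  induction L with
  | nil => intro z h; cases h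
  | cons x L ih =>
    intro z h
    rcases List.mem_cons.1 h with rfl | h
    · exact le_max_left _ _
    · exact le_trans (ih z h) (le_max_right _ _)

lemma routing {l₁ l₂ : List (ℕ × ℕ)} (h₁ : Ok l₁) (h₂ : Ok l₂)
    (hlen : l₁.length = l₂.length) :
    ∃ c : Equiv.Perm ℕ, FinSupp c ∧ c * PP l₁ * c⁻¹ = PP l₂ := by
  classical
  set k := l₁.length with hk
  set M := (pts l₁ ++ pts l₂).foldr max 0 + 1 with hM
  have hfresh : ∀ z ∈ pts l₁ ++ pts l₂, z < M := by
    intro z hz; have := max_bound _ z hz; omega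
  set F := stdPairs M k with hF
  have hFlen : F.length = k := by simp [hF]
  have hptsF : pts F = List.range' M (2*k) := pts_stdPairs M k
  have hlen1 : (pts l₁).length = (pts F).length := by
    rw [pts_length, pts_length, hFlen]
  have hlen2 : (pts F).length = (pts l₂).length := by
    rw [pts_length, pts_length, hFlen, hlen]
  have hnd1 : (pts l₁ ++ pts F).Nodup := by
    rw [List.nodup_append]
    refine ⟨h₁, by rw [hptsF]; exact List.nodup_range', ?_⟩
    intro a ha b hb
    rw [hptsF] at hb
    have : M ≤ b := by
      have := List.mem_range'_1.1 hb; exact this.1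
    have : a < M := hfresh a (List.mem_append_left _ ha)
    omega
  have hnd2 : (pts F ++ pts l₂).Nodup := by
    rw [List.nodup_append]
    refine ⟨by rw [hptsF]; exact List.nodup_range', h₂, ?_⟩
    intro a ha b hb
    rw [hptsF] at ha
    have h1 : M ≤ a := (List.mem_range'_1.1 ha).1
    have : b < M := hfresh b (List.mem_append_right _ hb)
    omega
  set c₁ := PP ((pts l₁).zip (pts F)) with hc₁
  set c₂ := PP ((pts F).zip (pts l₂)) with hc₂
  have f1 := forall₂_zip_eval hnd1 hlen1
  have f2 := forall₂_zip_eval hnd2 hlen2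
  have fc : List.Forall₂ (fun x y => (c₂ * c₁) x = y) (pts l₁) (pts l₂) :=
    forall₂_comp f1 f2
  have fpairs := forall₂_pts_pairs fc hlen
  have hconj : conjP (c₂ * c₁) l₁ = l₂ := conjP_eq_of_forall₂ fpairs
  refine ⟨c₂ * c₁, FinSupp_mul (FinSupp_PP _) (FinSupp_PP _), ?_⟩
  rw [← hconj, PP_conjP]

lemma ConjS_iota {l : List (ℕ × ℕ)} (hok : Ok l) {k : ℕ} (hlen : l.length = k) :
    ConjS (_root_.iota k) (PP l) := by
  obtain ⟨c, hc, heq⟩ := routing (Ok_stdPairs 1 k) hok (by simp [hlen])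
  exact ⟨c, hc, by rw [iota_eq]; exact heq⟩

/- ---------------- Section 3 : disjoint cycle extraction ---------------- -/

def cycOk (L : List (List ℕ)) : Prop := L.flatten.Nodup ∧ ∀ c ∈ L, 2 ≤ c.length

def cycProd (L : List (List ℕ)) : Equiv.Perm ℕ := (L.map List.formPerm).prod

def wt (L : List (List ℕ)) : ℕ := (L.map (fun c => c.length - 1)).sum

@[simp] lemma cycProd_nil : cycProd [] = 1 := rfl

@[simp] lemma cycProd_cons (c : List ℕ) (L : List (List ℕ)) :
    cycProd (c :: L) = c.formPerm * cycProd L := by simp [cycProd]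

@[simp] lemma wt_nil : wt [] = 0 := rfl

@[simp] lemma wt_cons (c : List ℕ) (L : List (List ℕ)) :
    wt (c :: L) = (c.length - 1) + wt L := by simp [wt]

lemma cycProd_fix {L : List (List ℕ)} {z : ℕ} (h : z ∉ L.flatten) : cycProd L z = z := by
  induction L with
  | nil => rfl
  | cons c L ih =>
    simp only [List.flatten_cons, List.mem_append, not_or] at h
    simp [Equiv.Perm.mul_apply, ih h.2, List.formPerm_apply_of_notMem h.1]

lemma cyc_pairwise_commute {L : List (List ℕ)} (hok : cycOk L) :
    (L.map List.formPerm).Pairwise Commute := by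
  have hpw : L.Pairwise List.Disjoint := (List.nodup_flatten.1 hok.1).2
  refine List.Pairwise.map _ ?_ hpw
  intro c d hcd
  refine Equiv.Perm.Disjoint.commute ?_
  intro z
  by_cases hz : z ∈ c
  · exact Or.inr (List.formPerm_apply_of_notMem (fun h => hcd hz h))
  · exact Or.inl (List.formPerm_apply_of_notMem hz)

lemma cycOk_perm {L L' : List (List ℕ)} (h : L ~ L') (hok : cycOk L) : cycOk L' :=
  ⟨h.flatten.nodup hok.1, fun c hc => hok.2 c (h.mem_iff.2 hc)⟩

lemma cycProd_perm {L L' : List (List ℕ)} (h : L ~ L') (hok : cycOk L) :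
    cycProd L = cycProd L' :=
  (h.map List.formPerm).prod_eq' (cyc_pairwise_commute hok)

lemma wt_perm {L L' : List (List ℕ)} (h : L ~ L') : wt L = wt L' :=
  (h.map _).sum_eq

/-- the key elementary identity. -/
lemma swap_shift {x y b : ℕ} (hxy : x ≠ y) (hby : b ≠ y) :
    Equiv.swap x y * Equiv.swap x b = Equiv.swap x b * Equiv.swap b y := by
  ext z
  simp only [Equiv.Perm.mul_apply, Equiv.swap_apply_def]
  split_ifs <;> omega

lemma split_identity {y : ℕ} {v : List ℕ} :
    ∀ (u : List ℕ) (x : ℕ), x ≠ y → y ∉ u →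
      Equiv.swap x y * List.formPerm (x :: (u ++ y :: v)) =
        List.formPerm (x :: u) * List.formPerm (y :: v) := by
  intro u
  induction u with
  | nil =>
    intro x hxy _
    simp only [List.nil_append, List.formPerm_cons_cons, List.formPerm_singleton, ← mul_assoc,
      Equiv.swap_mul_self, one_mul]
  | cons b u ih =>
    intro x hxy hyu
    have hby : b ≠ y := fun h => hyu (by simp [h])
    have hyu' : y ∉ u := fun h => hyu (by simp [h])
    rw [List.cons_append, List.formPerm_cons_cons, ← mul_assoc, swap_shift hxy hby,
      mul_assoc, ih b hby hyu', List.formPerm_cons_cons, mul_assoc]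

lemma merge_identity {y : ℕ} {v : List ℕ} (u : List ℕ) (x : ℕ) (hxy : x ≠ y) (hyu : y ∉ u) :
    List.formPerm (x :: (u ++ y :: v)) =
      Equiv.swap x y * (List.formPerm (x :: u) * List.formPerm (y :: v)) := by
  rw [← split_identity u x hxy hyu, ← mul_assoc, Equiv.swap_mul_self, one_mul]

/-- rotate a nodup list to start with a given member. -/
lemma rot_mem {c : List ℕ} (hc : c.Nodup) {x : ℕ} (hx : x ∈ c) :
    ∃ w, (x :: w) ~ c ∧ List.formPerm (x :: w) = c.formPerm := by
  obtain ⟨u, v, rfl⟩ := List.append_of_mem hx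
  refine ⟨v ++ u, ?_, ?_⟩
  · calc x :: (v ++ u) ~ x :: (u ++ v) := List.Perm.cons x (List.perm_append_comm)
      _ ~ u ++ x :: v := (List.perm_middle).symm
  · have h1 : (u ++ x :: v).rotate u.length = x :: (v ++ u) := by
      rw [List.rotate_eq_drop_append_take (by simp), List.drop_left, List.take_left,
        List.cons_append]
    rw [← h1, List.formPerm_rotate _ hc]

def addCyc (c : List ℕ) (M : List (List ℕ)) : List (List ℕ) :=
  if 2 ≤ c.length then c :: M else M

lemma addCyc_spec (c : List ℕ) (M : List (List ℕ)) (h : (c ++ M.flatten).Nodup)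
    (hM₂ : ∀ d ∈ M, 2 ≤ d.length) :
    cycOk (addCyc c M) ∧ cycProd (addCyc c M) = c.formPerm * cycProd M ∧
      wt (addCyc c M) = (c.length - 1) + wt M ∧
      (addCyc c M).flatten ⊆ c ++ M.flatten := by
  have hMnd : M.flatten.Nodup := (List.nodup_append.1 h).2.1
  by_cases h2 : 2 ≤ c.length
  · rw [addCyc, if_pos h2]
    exact ⟨⟨by simpa using h, fun d hd => by
      rcases List.mem_cons.1 hd with rfl | hd
      · exact h2
      · exact hM₂ d hd⟩, by simp, by simp, by simp⟩
  · rw [addCyc, if_neg h2]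
    have hform : c.formPerm = 1 := by
      obtain _ | ⟨z, _ | ⟨w, t⟩⟩ := c
      · rfl
      · exact List.formPerm_singleton z
      · exact absurd (by show 2 ≤ t.length + 1 + 1; omega) h2
    have hwt : c.length - 1 = 0 := by omega
    exact ⟨⟨hMnd, hM₂⟩, by simp [hform], by omega, fun z hz => List.mem_append_right _ hz⟩

lemma pull {L : List (List ℕ)} (hok : cycOk L) {c : List ℕ} (hc : c ∈ L) :
    ∃ E, (L ~ c :: E) ∧ cycProd L = c.formPerm * cycProd E ∧
      (c ++ E.flatten).Nodup ∧ wt L = (c.length - 1) + wt E ∧ cycOk E ∧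
      (∀ e ∈ E, e ∈ L) := by
  obtain ⟨E, hperm⟩ : ∃ E, L ~ c :: E := ⟨_, List.perm_cons_erase hc⟩
  have hok' : cycOk (c :: E) := cycOk_perm hperm hok
  have hnd : (c ++ E.flatten).Nodup := by simpa using hok'.1
  refine ⟨E, hperm, by rw [cycProd_perm hperm hok]; simp, hnd,
    by rw [wt_perm hperm]; simp, ?_, fun e he => hperm.mem_iff.2 (List.mem_cons_of_mem _ he)⟩
  exact ⟨(List.nodup_append.1 hnd).2.1, fun d hd => hok'.2 d (List.mem_cons_of_mem _ hd)⟩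

lemma absorb_mem_notmem {L : List (List ℕ)} (hok : cycOk L) {x y : ℕ} (hxy : x ≠ y)
    (hx : x ∈ L.flatten) (hy : y ∉ L.flatten) :
    ∃ L', cycOk L' ∧ cycProd L' = Equiv.swap x y * cycProd L ∧ wt L' = wt L + 1 := by
  obtain ⟨c, hcL, hxc⟩ := List.mem_flatten.1 hx
  obtain ⟨E, hperm, hprod, hfnd, hwt, hokE, hEL⟩ := pull hok hcL
  have hcnd : c.Nodup := (List.nodup_append.1 hfnd).1
  obtain ⟨w, hwperm, hwform⟩ := rot_mem hcnd hxc
  have hyc : y ∉ c := fun h => hy (List.mem_flatten.2 ⟨c, hcL, h⟩)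
  have hyw : y ∉ w := fun h => hyc (hwperm.mem_iff.1 (by simp [h]))
  have hyflat : y ∉ E.flatten := fun h =>
    hy (List.mem_flatten.2 (by
      obtain ⟨d, hd, hyd⟩ := List.mem_flatten.1 h
      exact ⟨d, hEL d hd, hyd⟩))
  refine ⟨((x :: w) ++ [y]) :: E, ?_, ?_, ?_⟩
  · constructor
    · rw [List.flatten_cons]
      have hperm2 : ((x :: w) ++ [y]) ++ E.flatten ~
          y :: ((x :: w) ++ E.flatten) := by
        calc ((x :: w) ++ [y]) ++ E.flatten
            ~ ([y] ++ (x :: w)) ++ E.flatten :=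
              (List.perm_append_comm).append (List.Perm.refl _)
          _ = y :: ((x :: w) ++ E.flatten) := by simp
      refine hperm2.symm.nodup ?_
      rw [List.nodup_cons]
      constructor
      · intro h
        rcases List.mem_append.1 h with h | h
        · rcases List.mem_cons.1 h with rfl | h
          · exact hxy rfl
          · exact hyw h
        · exact hyflat h
      · exact (hwperm.symm.append (List.Perm.refl _)).nodup hfnd
    · intro d hd
      rcases List.mem_cons.1 hd with rfl | hd
      · simp
      · exact hokE.2 d hd
  · rw [cycProd_cons, hprod, ← hwform, ← mul_assoc]
    congr 1
    have h0 : (x :: w) ++ [y] = x :: (w ++ y :: []) := by simp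
    rw [h0, merge_identity w x hxy hyw, List.formPerm_singleton, mul_one]
  · rw [wt_cons, hwt]
    have hlen : c.length = w.length + 1 := by simpa using hwperm.length_eq.symm
    have h2 : 2 ≤ c.length := hok.2 c hcL
    simp only [List.length_append, List.length_cons, List.length_nil]
    omega

lemma absorb_both {L : List (List ℕ)} (hok : cycOk L) {x y : ℕ} (hxy : x ≠ y)
    (hx : x ∈ L.flatten) (hy : y ∈ L.flatten) :
    ∃ L', cycOk L' ∧ cycProd L' = Equiv.swap x y * cycProd L ∧
      (wt L' = wt L + 1 ∨ wt L' + 1 = wt L) := by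
  obtain ⟨c, hcL, hxc⟩ := List.mem_flatten.1 hx
  obtain ⟨E, hperm, hprod, hfnd, hwt, hokE, hEL⟩ := pull hok hcL
  have hcnd : c.Nodup := (List.nodup_append.1 hfnd).1
  obtain ⟨w, hwperm, hwform⟩ := rot_mem hcnd hxc
  have hwnd : (x :: w).Nodup := hwperm.symm.nodup hcnd
  have h2c : 2 ≤ c.length := hok.2 c hcL
  have hlenw : c.length = w.length + 1 := by simpa using hwperm.length_eq.symm
  by_cases hyc : y ∈ c
  · -- same cycle : split
    have hyw : y ∈ w := by
      have h0 := hwperm.mem_iff.2 hyc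
      rcases List.mem_cons.1 h0 with rfl | h
      · exact absurd rfl hxy
      · exact h
    obtain ⟨u, v, rfl⟩ := List.append_of_mem hyw
    have hyu : y ∉ u := by
      have h0 : (u ++ y :: v).Nodup := (List.nodup_cons.1 hwnd).2
      intro h
      exact (List.disjoint_of_nodup_append h0) h (by simp)
    have hbig : ((x :: u) ++ ((y :: v) ++ E.flatten)).Nodup := by
      have h0 : ((x :: (u ++ y :: v)) ++ E.flatten).Nodup :=
        (hwperm.symm.append (List.Perm.refl _)).nodup hfnd
      simpa [List.append_assoc] using h0
    have hinnernd : ((y :: v) ++ E.flatten).Nodup :=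
      (List.nodup_append.1 hbig).2.1
    obtain ⟨hok1, hprod1, hwt1, hsub1⟩ := addCyc_spec (y :: v) E hinnernd hokE.2
    have houternd : ((x :: u) ++ (addCyc (y :: v) E).flatten).Nodup := by
      rw [List.nodup_append]
      obtain ⟨ha, hb, hdisj⟩ := List.nodup_append.1 hbig
      exact ⟨ha, hok1.1, fun a haa b hab => hdisj a haa b (hsub1 hab)⟩
    obtain ⟨hok2, hprod2, hwt2, _⟩ := addCyc_spec (x :: u) _ houternd hok1.2
    refine ⟨addCyc (x :: u) (addCyc (y :: v) E), hok2, ?_, Or.inr ?_⟩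
    · rw [hprod2, hprod1, hprod, ← hwform, ← mul_assoc, ← mul_assoc,
        split_identity u x hxy hyu, mul_assoc]
    · rw [hwt2, hwt1, hwt]
      simp only [List.length_cons, List.length_append] at hlenw ⊢
      omega
  · -- different cycles : merge
    have hyE : y ∈ E.flatten := by
      have h0 : y ∈ c ++ E.flatten := by
        have h1 : L.flatten ~ c ++ E.flatten := by simpa using hperm.flatten
        exact h1.mem_iff.1 hy
      rcases List.mem_append.1 h0 with h | h
      · exact absurd h hyc
      · exact h
    obtain ⟨d, hdE, hyd⟩ := List.mem_flatten.1 hyE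
    obtain ⟨E', hpermE, hprodE, hfndE, hwtE, hokE', hE'E⟩ := pull hokE hdE
    have hdnd : d.Nodup := (List.nodup_append.1 hfndE).1
    obtain ⟨v, hvperm, hvform⟩ := rot_mem hdnd hyd
    have h2d : 2 ≤ d.length := hokE.2 d hdE
    have hlenv : d.length = v.length + 1 := by simpa using hvperm.length_eq.symm
    have hyw : y ∉ w := fun h => hyc (hwperm.mem_iff.1 (by simp [h]))
    refine ⟨((x :: w) ++ (y :: v)) :: E', ?_, ?_, Or.inl ?_⟩
    · constructor
      · rw [List.flatten_cons]
        have h1 : L.flatten ~ ((x :: w) ++ ((y :: v) ++ E'.flatten)) := by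
          calc L.flatten ~ c ++ E.flatten := by simpa using hperm.flatten
            _ ~ c ++ (d ++ E'.flatten) := by
                refine List.Perm.append (List.Perm.refl _) ?_
                simpa using hpermE.flatten
            _ ~ (x :: w) ++ ((y :: v) ++ E'.flatten) :=
                (hwperm.symm).append ((hvperm.symm).append (List.Perm.refl _))
        have h0 := h1.nodup hok.1
        simpa [List.append_assoc] using h0
      · intro e he
        rcases List.mem_cons.1 he with rfl | he
        · simp only [List.length_append, List.length_cons]; omega
        · exact hokE'.2 e he
    · rw [cycProd_cons, hprod, hprodE, ← hwform, ← hvform]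
      have heq : (x :: w) ++ (y :: v) = x :: (w ++ y :: v) := by simp
      rw [heq, merge_identity w x hxy hyw, mul_assoc, mul_assoc]
    · rw [wt_cons, hwt, hwtE]
      simp only [List.length_cons, List.length_append] at hlenw hlenv ⊢
      omega

lemma absorb {L : List (List ℕ)} (hok : cycOk L) {x y : ℕ} (hxy : x ≠ y) :
    ∃ L', cycOk L' ∧ cycProd L' = Equiv.swap x y * cycProd L ∧
      (wt L' = wt L + 1 ∨ wt L' + 1 = wt L) := by
  by_cases hx : x ∈ L.flatten
  · by_cases hy : y ∈ L.flatten
    · exact absorb_both hok hxy hx hy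
    · obtain ⟨L', h1, h2, h3⟩ := absorb_mem_notmem hok hxy hx hy
      exact ⟨L', h1, h2, Or.inl h3⟩
  · by_cases hy : y ∈ L.flatten
    · obtain ⟨L', h1, h2, h3⟩ := absorb_mem_notmem hok hxy.symm hy hx
      exact ⟨L', h1, by rw [h2, Equiv.swap_comm], Or.inl h3⟩
    · refine ⟨[x, y] :: L, ?_, ?_, Or.inl ?_⟩
      · constructor
        · rw [List.flatten_cons]
          refine List.nodup_append.2 ⟨by simp [hxy], hok.1, ?_⟩
          intro a ha b hb
          rcases List.mem_cons.1 ha with rfl | ha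
          · rintro rfl; exact hx hb
          · rcases List.mem_cons.1 ha with rfl | ha
            · rintro rfl; exact hy hb
            · simp at ha
        · intro d hd
          rcases List.mem_cons.1 hd with rfl | hd
          · simp
          · exact hok.2 d hd
      · rw [cycProd_cons, List.formPerm_pair]
      · simp [wt_cons]; omega

theorem extract (ts : List (Equiv.Perm ℕ)) (h : ∀ t ∈ ts, t.IsSwap) :
    ∃ L, cycOk L ∧ cycProd L = ts.prod ∧ wt L ≤ ts.length ∧ wt L % 2 = ts.length % 2 := by
  induction ts with
  | nil => exact ⟨[], ⟨by simp, by simp⟩, by simp, by simp, by simp⟩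
  | cons t rest ih =>
    obtain ⟨L, hok, hprod, hle, hpar⟩ := ih (fun t ht => h t (List.mem_cons_of_mem _ ht))
    obtain ⟨x, y, hxy, rfl⟩ := h t (by simp)
    obtain ⟨L', hok', hprod', hwt'⟩ := absorb hok hxy
    refine ⟨L', hok', by rw [hprod', hprod, List.prod_cons], ?_, ?_⟩
    · simp only [List.length_cons]; omega
    · simp only [List.length_cons]; omega

/- ---------------- Section 4 : reversal involutions ---------------- -/

def twoPtr : List ℕ → List (ℕ × ℕ)
  | [] => []
  | [_] => []
  | x :: y :: rest =>
    (x, (y :: rest).getLast (by simp)) :: twoPtr ((y :: rest).dropLast)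
termination_by l => l.length
decreasing_by simp only [List.length_dropLast, List.length_cons]; omega

@[simp] lemma twoPtr_nil : twoPtr [] = [] := by simp [twoPtr]

@[simp] lemma twoPtr_single (x : ℕ) : twoPtr [x] = [] := by simp [twoPtr]

lemma twoPtr_concat (x z : ℕ) (u : List ℕ) :
    twoPtr (x :: (u ++ [z])) = (x, z) :: twoPtr u := by
  cases u with
  | nil => simp [twoPtr]
  | cons a u' =>
    rw [show x :: ((a :: u') ++ [z]) = x :: a :: (u' ++ [z]) from rfl, twoPtr]
    congr 1
    · congr 1
      simp
    · rw [show a :: (u' ++ [z]) = (a :: u') ++ [z] from rfl, List.dropLast_concat]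

lemma bidir_cases (l : List ℕ) (h : 2 ≤ l.length) : ∃ x u z, l = x :: (u ++ [z]) := by
  cases l with
  | nil => simp at h
  | cons x rest =>
    rcases List.eq_nil_or_concat rest with rfl | ⟨u, z, rfl⟩
    · simp at h
    · exact ⟨x, u, z, by simp⟩

lemma twoPtr_spec : ∀ n (l : List ℕ), l.length = n → l.Nodup →
    Ok (twoPtr l) ∧ (∀ z ∈ pts (twoPtr l), z ∈ l) ∧
      2 * (twoPtr l).length = l.length - (l.length % 2) ∧
      (∀ i (hi : i < l.length), PP (twoPtr l) l[i] = l[l.length - 1 - i]'(by omega)) := by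
  intro n
  induction n using Nat.strong_induction_on with
  | _ n ih =>
    intro l hlen hnd
    by_cases h2 : 2 ≤ l.length
    · obtain ⟨x, u, z, rfl⟩ := bidir_cases l h2
      have hlen' : (x :: (u ++ [z])).length = u.length + 2 := by simp
      have hxz : x ≠ z := by
        intro h; rw [List.nodup_cons] at hnd; exact hnd.1 (by simp [h])
      have hxu : x ∉ u := by
        intro h; rw [List.nodup_cons] at hnd; exact hnd.1 (by simp [h])
      have hzu : z ∉ u := by
        have : (u ++ [z]).Nodup := (List.nodup_cons.1 hnd).2
        intro h
        exact (List.disjoint_of_nodup_append this) h (by simp)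
      have hund : u.Nodup := by
        have : (u ++ [z]).Nodup := (List.nodup_cons.1 hnd).2
        exact (List.nodup_append.1 this).1
      obtain ⟨ihok, ihsub, ihlen, iheval⟩ := ih u.length (by omega) u rfl hund
      rw [twoPtr_concat]
      have hptssub : ∀ w ∈ pts (twoPtr u), w ∈ u := ihsub
      have hxp : x ∉ pts (twoPtr u) := fun h => hxu (hptssub x h)
      have hzp : z ∉ pts (twoPtr u) := fun h => hzu (hptssub z h)
      refine ⟨?_, ?_, ?_, ?_⟩
      · exact Ok_cons_iff.2 ⟨hxz, hxp, hzp, ihok⟩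
      · intro w hw
        rcases List.mem_cons.1 hw with rfl | hw
        · simp
        · rcases List.mem_cons.1 hw with rfl | hw
          · simp
          · have := hptssub w hw; simp [this]
      · simp only [List.length_cons, hlen']
        omega
      · intro i hi
        rw [hlen'] at hi
        have hPP : PP ((x, z) :: twoPtr u) = Equiv.swap x z * PP (twoPtr u) := PP_cons _ _
        rcases Nat.lt_trichotomy i 0 with h0 | rfl | hpos
        · omega
        · -- i = 0 : x ↦ z
          have hget0 : (x :: (u ++ [z]))[0] = x := rfl
          have hgetlast : (x :: (u ++ [z]))[(x :: (u ++ [z])).length - 1 - 0]'(by omega) = z := by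
            simp only [hlen']
            simp only [show u.length + 2 - 1 - 0 = u.length + 1 from by omega,
              List.getElem_cons_succ]
            simp
          rw [hget0, hgetlast, hPP, Equiv.Perm.mul_apply, PP_fix hxp, Equiv.swap_apply_left]
        · -- i ≥ 1
          rcases Nat.lt_or_ge i (u.length + 1) with hlt | hge
          · -- 1 ≤ i ≤ u.length : inner element
            obtain ⟨j, rfl⟩ : ∃ j, i = j + 1 := ⟨i - 1, by omega⟩
            have hj : j < u.length := by omega
            have hget : (x :: (u ++ [z]))[j+1]'(by simp; omega) = u[j] := by
              rw [List.getElem_cons_succ]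
              exact List.getElem_append_left hj
            have htarget : (x :: (u ++ [z]))[(x :: (u ++ [z])).length - 1 - (j+1)]'(by omega)
                = u[u.length - 1 - j]'(by omega) := by
              simp only [hlen']
              simp only [show u.length + 2 - 1 - (j + 1) = (u.length - 1 - j) + 1 from by omega,
                List.getElem_cons_succ]
              exact List.getElem_append_left (by omega)
            rw [hget, htarget, hPP, Equiv.Perm.mul_apply, iheval j hj]
            have hmem : u[u.length - 1 - j]'(by omega) ∈ u := List.getElem_mem _
            exact Equiv.swap_apply_of_ne_of_ne
              (fun h => hxu (h ▸ hmem)) (fun h => hzu (h ▸ hmem))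
          · -- i = u.length + 1 : last element z ↦ x
            have : i = u.length + 1 := by omega
            subst this
            have hget : (x :: (u ++ [z]))[u.length + 1]'(by simp) = z := by
              rw [List.getElem_cons_succ]; simp
            have htarget : (x :: (u ++ [z]))[(x :: (u ++ [z])).length - 1 - (u.length+1)]'(by omega) = x := by
              simp only [hlen']
              simp only [show u.length + 2 - 1 - (u.length + 1) = 0 from by omega]
              rfl
            rw [hget, htarget, hPP, Equiv.Perm.mul_apply, PP_fix hzp, Equiv.swap_apply_right]
    · -- length ≤ 1
      have h01 : twoPtr l = [] := by
        cases l with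
        | nil => simp
        | cons a t =>
          cases t with
          | nil => simp
          | cons b t' => simp at h2
      rw [h01]
      refine ⟨by simp [Ok, pts], by simp [pts], by simp at h2 ⊢; omega, ?_⟩
      intro i hi
      have : l.length = 1 := by omega
      have : i = 0 := by omega
      subst this
      simp only [PP_nil, Equiv.Perm.one_apply]
      congr 1
      omega

lemma formPerm_two_invs : ∀ {l : List ℕ}, l.Nodup →
    List.formPerm l = PP (twoPtr l.tail) * PP (twoPtr l) := by
  intro l hnd
  cases l with
  | nil => simp
  | cons a t =>
    obtain ⟨okl, subl, _, evall⟩ := twoPtr_spec (a::t).length (a::t) rfl hnd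
    have hndt : t.Nodup := (List.nodup_cons.1 hnd).2
    obtain ⟨okt, subt, _, evalt⟩ := twoPtr_spec t.length t rfl hndt
    have hat : a ∉ t := (List.nodup_cons.1 hnd).1
    ext z
    rw [List.tail_cons, Equiv.Perm.mul_apply]
    by_cases hz : z ∈ (a :: t)
    · obtain ⟨i, hi, rfl⟩ := List.mem_iff_getElem.1 hz
      rw [evall i hi, List.formPerm_apply_getElem _ hnd i hi]
      by_cases hlast : i = t.length
      · subst hlast
        have h1 : (a :: t)[(a :: t).length - 1 - t.length]'(by simp) = a := by
          simp only [List.length_cons, show t.length + 1 - 1 - t.length = 0 from by omega]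
          rfl
        have h2 : (a :: t)[(t.length + 1) % (a :: t).length]'(by
            simp) = a := by
          simp only [List.length_cons, Nat.mod_self]
          rfl
        rw [h1]
        have h3 : PP (twoPtr t) a = a := PP_fix (fun h => hat (subt a h))
        rw [h3]
        exact h2
      · have hilt : i < t.length := by
          simp only [List.length_cons] at hi; omega
        have h1 : (a :: t)[(a :: t).length - 1 - i]'(by simp) =
            t[t.length - 1 - i]'(by omega) := by
          simp only [List.length_cons,
            show t.length + 1 - 1 - i = (t.length - 1 - i) + 1 from by omega,
            List.getElem_cons_succ]
        have h2 : (a :: t)[(i + 1) % (a :: t).length]'(by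
            exact Nat.mod_lt _ (by simp)) = t[i] := by
          simp only [List.length_cons, Nat.mod_eq_of_lt (by omega : i + 1 < t.length + 1),
            List.getElem_cons_succ]
        rw [h1, h2, evalt _ (by omega)]
        congr 1
        omega
    · have hza : z ≠ a := fun h => hz (by simp [h])
      have hzt : z ∉ t := fun h => hz (by simp [h])
      rw [List.formPerm_apply_of_notMem hz, PP_fix (fun h => hz (subl z h)),
        PP_fix (fun h => hzt (subt z h))]

lemma cycle_two_invs {c : List ℕ} (hnd : c.Nodup) (h2 : 2 ≤ c.length) :
    ∃ A B : List (ℕ × ℕ), Ok A ∧ Ok B ∧ (∀ z ∈ pts A, z ∈ c) ∧ (∀ z ∈ pts B, z ∈ c) ∧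
      PP A * PP B = c.formPerm ∧ A.length + B.length = c.length - 1 ∧
      (B.length = A.length ∨ B.length = A.length + 1) := by
  obtain ⟨okl, subl, lenl, _⟩ := twoPtr_spec c.length c rfl hnd
  have hndt : c.tail.Nodup := hnd.tail
  obtain ⟨okt, subt, lent, _⟩ := twoPtr_spec c.tail.length c.tail rfl hndt
  have htlen : c.tail.length = c.length - 1 := by
    cases c with
    | nil => simp at h2
    | cons a t => simp
  refine ⟨twoPtr c.tail, twoPtr c, okt, okl,
    fun z hz => List.mem_of_mem_tail (subt z hz), subl,
    (formPerm_two_invs hnd).symm, ?_, ?_⟩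
  · rw [htlen] at lent; omega
  · rw [htlen] at lent; omega

lemma glue {c : List ℕ} {rest : List (List ℕ)} {X Y A' B' : List (ℕ × ℕ)}
    (hdisj : ∀ z ∈ c, z ∉ rest.flatten)
    (hX : Ok X) (hY : Ok Y) (hA : Ok A') (hB : Ok B')
    (hXc : ∀ z ∈ pts X, z ∈ c) (hYc : ∀ z ∈ pts Y, z ∈ c)
    (hAr : ∀ z ∈ pts A', z ∈ rest.flatten) (hBr : ∀ z ∈ pts B', z ∈ rest.flatten)
    (hcyc : PP X * PP Y = c.formPerm) (hrest : PP A' * PP B' = cycProd rest) :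
    PP (X ++ A') * PP (Y ++ B') = cycProd (c :: rest) ∧
      Ok (X ++ A') ∧ Ok (Y ++ B') ∧
      (∀ z ∈ pts (X ++ A'), z ∈ (c :: rest).flatten) ∧
      (∀ z ∈ pts (Y ++ B'), z ∈ (c :: rest).flatten) := by
  have hcomm : PP A' * PP Y = PP Y * PP A' :=
    PP_comm (fun z hz hz' => hdisj _ (hYc z hz') (hAr z hz))
  refine ⟨?_, ?_, ?_, ?_, ?_⟩
  · rw [PP_append, PP_append, cycProd_cons, ← hcyc, ← hrest]
    rw [mul_assoc, ← mul_assoc (PP A'), hcomm, mul_assoc, ← mul_assoc]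
  · rw [Ok, pts_append]
    exact List.nodup_append.2 ⟨hX, hA, fun z hz w hw => by rintro rfl; exact hdisj z (hXc z hz) (hAr z hw)⟩
  · rw [Ok, pts_append]
    exact List.nodup_append.2 ⟨hY, hB, fun z hz w hw => by rintro rfl; exact hdisj z (hYc z hz) (hBr z hw)⟩
  · intro z hz
    rw [pts_append, List.mem_append] at hz
    rw [List.flatten_cons, List.mem_append]
    rcases hz with hz | hz
    · exact Or.inl (hXc z hz)
    · exact Or.inr (hAr z hz)
  · intro z hz
    rw [pts_append, List.mem_append] at hz
    rw [List.flatten_cons, List.mem_append]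
    rcases hz with hz | hz
    · exact Or.inl (hYc z hz)
    · exact Or.inr (hBr z hz)

lemma comb : ∀ L : List (List ℕ), cycOk L →
    ∃ A B : List (ℕ × ℕ), Ok A ∧ Ok B ∧
      (∀ z ∈ pts A, z ∈ L.flatten) ∧ (∀ z ∈ pts B, z ∈ L.flatten) ∧
      PP A * PP B = cycProd L ∧ A.length + B.length = wt L ∧
      (A.length = B.length ∨ A.length = B.length + 1 ∨ B.length = A.length + 1) := by
  intro L
  induction L with
  | nil =>
    intro _
    exact ⟨[], [], by simp [Ok, pts], by simp [Ok, pts], by simp [pts], by simp [pts],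
      by simp, by simp, Or.inl rfl⟩
  | cons c rest ih =>
    intro hok
    have hnd : (c ++ rest.flatten).Nodup := by simpa using hok.1
    have hdisj : ∀ z ∈ c, z ∉ rest.flatten := fun z hz hz' =>
      (List.disjoint_of_nodup_append hnd) hz hz'
    have hokrest : cycOk rest :=
      ⟨(List.nodup_append.1 hnd).2.1, fun d hd => hok.2 d (List.mem_cons_of_mem _ hd)⟩
    obtain ⟨A', B', hA, hB, hAr, hBr, hprod, hlen, hdiff⟩ := ih hokrest
    have hcnd : c.Nodup := (List.nodup_append.1 hnd).1
    have h2c : 2 ≤ c.length := hok.2 c (by simp)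
    obtain ⟨Ac, Bc, okAc, okBc, hAcc, hBcc, hcyc, hclen, hcdiff⟩ := cycle_two_invs hcnd h2c
    by_cases hchoice : Bc.length + B'.length ≤ Ac.length + A'.length + 1
    · -- orientation 1 : (Ac ++ A', Bc ++ B')
      obtain ⟨g1, g2, g3, g4, g5⟩ :=
        glue hdisj okAc okBc hA hB hAcc hBcc hAr hBr hcyc hprod
      refine ⟨Ac ++ A', Bc ++ B', g2, g3, g4, g5, g1, ?_, ?_⟩
      · simp only [List.length_append, wt_cons]; omega
      · simp only [List.length_append]; omega
    · -- orientation 2 : (conjP (PP Ac) Bc ++ A', Ac ++ B')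
      have hconj : PP (conjP (PP Ac) Bc) * PP Ac = c.formPerm := by
        rw [PP_conjP, PP_inv okAc, mul_assoc, mul_assoc, PP_sq okAc, mul_one, hcyc]
      have okBc' : Ok (conjP (PP Ac) Bc) := Ok_conjP _ okBc
      have hBcc' : ∀ z ∈ pts (conjP (PP Ac) Bc), z ∈ c := by
        intro z hz
        rw [pts_conjP, List.mem_map] at hz
        obtain ⟨w, hw, rfl⟩ := hz
        by_cases hwa : w ∈ pts Ac
        · exact hAcc _ (pts_closed okAc hwa)
        · rw [PP_fix hwa]; exact hBcc w hw
      obtain ⟨g1, g2, g3, g4, g5⟩ :=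
        glue hdisj okBc' okAc hA hB hBcc' hAcc hAr hBr hconj hprod
      refine ⟨conjP (PP Ac) Bc ++ A', Ac ++ B', g2, g3, g4, g5, g1, ?_, ?_⟩
      · simp only [List.length_append, wt_cons, conjP_length]; omega
      · simp only [List.length_append, conjP_length]; omega

/- ---------------- Section 5 : parity, padding, endgame ---------------- -/

lemma cycProd_ne_one {L : List (List ℕ)} (hok : cycOk L) (hne : L ≠ []) :
    cycProd L ≠ 1 := by
  obtain ⟨c, hcL⟩ : ∃ c, c ∈ L := by
    cases L with
    | nil => exact absurd rfl hne
    | cons c rest => exact ⟨c, by simp⟩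
  obtain ⟨E, hperm, hprod, hfnd, _, _, _⟩ := pull hok hcL
  have h2 : 2 ≤ c.length := hok.2 c hcL
  obtain ⟨x, w, rfl⟩ : ∃ x w, c = x :: w := by
    cases c with
    | nil => simp at h2
    | cons x w => exact ⟨x, w, rfl⟩
  obtain ⟨b, w', rfl⟩ : ∃ b w', w = b :: w' := by
    cases w with
    | nil => simp at h2
    | cons b w' => exact ⟨b, w', rfl⟩
  have hcnd : (x :: b :: w').Nodup := (List.nodup_append.1 hfnd).1
  have hxE : x ∉ E.flatten := fun h =>
    (List.disjoint_of_nodup_append hfnd) (by simp) h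
  intro hone
  have : cycProd L x = x := by rw [hone]; rfl
  rw [hprod, Equiv.Perm.mul_apply, cycProd_fix hxE,
    List.formPerm_apply_head _ _ _ hcnd] at this
  exact (List.nodup_cons.1 hcnd).1 (by simp [this])

lemma swap_list_reverse_prod {l : List (Equiv.Perm ℕ)} (h : ∀ t ∈ l, t.IsSwap) :
    l.reverse.prod = (l.prod)⁻¹ := by
  rw [List.prod_reverse_noncomm]
  congr 1
  have h0 : l.map (fun x => x⁻¹) = l.map id := by
    apply List.map_congr_left
    intro t ht
    obtain ⟨x, y, _, rfl⟩ := h t ht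
    exact Equiv.swap_inv x y
  rw [h0, List.map_id]

lemma swap_lists_parity {l₁ l₂ : List (Equiv.Perm ℕ)} (h₁ : ∀ t ∈ l₁, t.IsSwap)
    (h₂ : ∀ t ∈ l₂, t.IsSwap) (hprod : l₁.prod = l₂.prod) :
    l₁.length % 2 = l₂.length % 2 := by
  have hall : ∀ t ∈ l₁ ++ l₂.reverse, t.IsSwap := by
    intro t ht
    rcases List.mem_append.1 ht with ht | ht
    · exact h₁ t ht
    · exact h₂ t (List.mem_reverse.1 ht)
  have hone : (l₁ ++ l₂.reverse).prod = 1 := by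
    rw [List.prod_append, swap_list_reverse_prod h₂, hprod, mul_inv_cancel]
  obtain ⟨L, hok, hprodL, _, hpar⟩ := extract _ hall
  have hLnil : L = [] := by
    by_contra hne
    exact cycProd_ne_one hok hne (hprodL.trans hone)
  rw [hLnil] at hpar
  simp only [wt_nil, List.length_append, List.length_reverse] at hpar
  omega

lemma pad {g : Equiv.Perm ℕ} (k : ℕ) :
    ∀ j, j ≤ k → ∀ a b : List (ℕ × ℕ), Ok a → Ok b → a.length = j → b.length = j →
      PP a * PP b = g →
      ∃ a' b' : List (ℕ × ℕ), Ok a' ∧ Ok b' ∧ a'.length = k ∧ b'.length = k ∧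
        PP a' * PP b' = g := by
  intro j hjk
  induction k, hjk using Nat.le_induction with
  | base => intro a b ha hb hla hlb hab; exact ⟨a, b, ha, hb, hla, hlb, hab⟩
  | succ m hjm ih =>
    intro a b ha hb hla hlb hab
    obtain ⟨a₀, b₀, ha₀, hb₀, hla₀, hlb₀, hab₀⟩ := ih a b ha hb hla hlb hab
    set M := ((pts a₀ ++ pts b₀).foldr max 0) + 1 with hM
    have hfresh : ∀ z ∈ pts a₀ ++ pts b₀, z < M := by
      intro z hz; have := max_bound _ z hz; omega
    have hMa : M ∉ pts a₀ := fun h => by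
      have := hfresh M (List.mem_append_left _ h); omega
    have hM1a : M + 1 ∉ pts a₀ := fun h => by
      have := hfresh (M+1) (List.mem_append_left _ h); omega
    have hMb : M ∉ pts b₀ := fun h => by
      have := hfresh M (List.mem_append_right _ h); omega
    have hM1b : M + 1 ∉ pts b₀ := fun h => by
      have := hfresh (M+1) (List.mem_append_right _ h); omega
    refine ⟨a₀ ++ [(M, M+1)], (M, M+1) :: b₀, ?_, ?_, by simp [hla₀], by simp [hlb₀], ?_⟩
    · rw [Ok, pts_append]
      refine List.nodup_append.2 ⟨ha₀, by simp [pts], ?_⟩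
      intro z hz w hz'
      simp [pts] at hz'
      rcases hz' with rfl | rfl
      · exact fun e => hMa (e ▸ hz)
      · exact fun e => hM1a (e ▸ hz)
    · exact Ok_cons_iff.2 ⟨by omega, hMb, hM1b, hb₀⟩
    · simp only [PP_append, PP_cons, PP_nil, mul_one]
      show PP a₀ * Equiv.swap M (M+1) * (Equiv.swap M (M+1) * PP b₀) = g
      rw [mul_assoc, ← mul_assoc (Equiv.swap M (M+1)), Equiv.swap_mul_self, one_mul, hab₀]

end AuxStmt11

/-- any even `g ∈ S_∞` is, for any `k ≥ λ(g)/2`, a product of two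
`S_∞`-conjugates of `ι_k`. -/
theorem stmt11 (g : Equiv.Perm ℕ) (hfs : FinSupp g) (hev : IsEvenPerm g) (k : ℕ)
    (hk : wl g ≤ 2 * k) :
    ∃ a b : Equiv.Perm ℕ, ConjS (iota k) a ∧ ConjS (iota k) b ∧ a * b = g := by
  obtain ⟨le, hle_swap, hle_even, hle_prod⟩ := hev
  have hSne : {n | ∃ l : List (Equiv.Perm ℕ),
      l.length = n ∧ (∀ τ ∈ l, τ.IsSwap) ∧ l.prod = g}.Nonempty :=
    ⟨le.length, le, rfl, hle_swap, hle_prod⟩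
  obtain ⟨ts, hts_len, hts_swap, hts_prod⟩ := Nat.sInf_mem hSne
  have hwl : ts.length = wl g := hts_len
  have hpar : ts.length % 2 = le.length % 2 :=
    swap_lists_parity hts_swap hle_swap (hts_prod.trans hle_prod.symm)
  have hts_even : ts.length % 2 = 0 := by
    obtain ⟨r, hr⟩ := hle_even
    omega
  obtain ⟨L, hok, hprodL, hwle, hwpar⟩ := extract ts hts_swap
  obtain ⟨A, B, okA, okB, _, _, hAB, hsum, hdiff⟩ := comb L hok
  have hlenAB : A.length = B.length := by omega
  have hAk : A.length ≤ k := by omega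
  obtain ⟨a', b', oka', okb', ha'len, hb'len, hab'⟩ :=
    pad k A.length hAk A B okA okB rfl hlenAB.symm (by rw [hAB, hprodL, hts_prod])
  exact ⟨PP a', PP b', ConjS_iota oka' ha'len, ConjS_iota okb' hb'len, hab'⟩
end
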